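/- arXiv:2405.09523 — 7 statements merged into one kernel-verified Lean document; each statement's English description precedes it below -/
import Mathlib

section
/- If f : [0,1] → ℝ is bounded and twice differentiable at a point x ∈ [0,1], then n·(B_n(f, x) − f(x)) tends to x(1−x)·f''(x)/2 as n → ∞, where B_n(f, x) = Σ_{i=0}^n C(n,i) f(i/n) x^i (1−x)^{n−i} is the n-th Bernstein polynomial of f at x. -/
/-!
Write `f y = f x + f' x (y - x) + f'' x / 2 (y - x)² + r y`; the mean value theorem applied to
`r` on a small ball gives `r y = o((y - x)²)`. Bernstein operators reproduce constants, and their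
first two central moments are `0` and `x (1 - x) / n`, so
`n (Bₙ f x - f x) = x (1 - x) f'' x / 2 + n Bₙ r x`. As `r` is bounded on `[0,1]`, for every
`ε > 0` there is `C` with `|r y| ≤ ε (y - x)² + C (y - x)⁴` there, and the fourth central moment
is at most `1 / n²`, so `|n Bₙ r x| ≤ ε + C / n`. All moments come from the factorial moments
`∑ ν (ν - 1) ⋯ (ν - r + 1) b_{n,ν}(x) = n (n - 1) ⋯ (n - r + 1) xʳ`.
-/

open Filter Set Finset Polynomial Topology Asymptotics

theorem Nat.choose_mul_descFactorial {n k r : ℕ} (hrk : r ≤ k) :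
    n.choose k * k.descFactorial r = n.descFactorial r * (n - r).choose (k - r) := by
  rw [Nat.descFactorial_eq_factorial_mul_choose, Nat.descFactorial_eq_factorial_mul_choose,
    Nat.mul_left_comm, Nat.choose_mul hrk, Nat.mul_assoc]

theorem Nat.cast_descFactorial_eq_prod_range {R : Type*} [CommRing R] (ν k : ℕ) :
    (ν.descFactorial k : R) = ∏ j ∈ range k, ((ν : R) - j) := by
  rw [← descPochhammer_eval_eq_descFactorial, descPochhammer_eval_eq_prod_range]

namespace bernsteinPolynomial

variable {R : Type*} [CommRing R]

theorem eval_eq (n ν : ℕ) (x : R) :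
    (bernsteinPolynomial R n ν).eval x = n.choose ν * x ^ ν * (1 - x) ^ (n - ν) := by
  simp [bernsteinPolynomial]

theorem sum_eval (n : ℕ) (x : R) :
    ∑ ν ∈ range (n + 1), (bernsteinPolynomial R n ν).eval x = 1 := by
  simpa [eval_finsetSum] using congrArg (eval x) (bernsteinPolynomial.sum R n)

theorem sum_descFactorial_mul_eval (n r : ℕ) (x : R) :
    ∑ ν ∈ range (n + 1), (ν.descFactorial r : R) * (bernsteinPolynomial R n ν).eval x =
      n.descFactorial r * x ^ r := by
  rcases lt_or_ge n r with hnr | hrn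
  · rw [Nat.descFactorial_of_lt hnr, Nat.cast_zero, zero_mul]
    refine sum_eq_zero fun ν hν => ?_
    rw [Nat.descFactorial_of_lt (by grind), Nat.cast_zero, zero_mul]
  obtain ⟨m, rfl⟩ := Nat.exists_eq_add_of_le hrn
  have hlow : ∑ ν ∈ range r, (ν.descFactorial r : R) * (bernsteinPolynomial R (r + m) ν).eval x
      = 0 := sum_eq_zero fun ν hν => by
    rw [Nat.descFactorial_of_lt (mem_range.1 hν), Nat.cast_zero, zero_mul]
  have hterm (j : ℕ) : ((r + j).descFactorial r : R) * (bernsteinPolynomial R (r + m) (r + j)).eval x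
      = (r + m).descFactorial r * x ^ r * (bernsteinPolynomial R m j).eval x := by
    have h : ((r + m).choose (r + j) : R) * (r + j).descFactorial r =
        (r + m).descFactorial r * m.choose j := by
      have := Nat.choose_mul_descFactorial (n := r + m) (Nat.le_add_right r j)
      rw [Nat.add_sub_cancel_left, Nat.add_sub_cancel_left] at this
      exact_mod_cast congrArg (Nat.cast : ℕ → R) this
    rw [eval_eq, eval_eq, Nat.add_sub_add_left, pow_add]
    linear_combination (x ^ r * x ^ j * (1 - x) ^ (m - j)) * h
  rw [Nat.add_assoc, sum_range_add, hlow, zero_add]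
  simp only [hterm, ← mul_sum, sum_eval, mul_one]

theorem sum_sub_mul_eval (n : ℕ) (x : R) :
    ∑ ν ∈ range (n + 1), ((ν : R) - n * x) * (bernsteinPolynomial R n ν).eval x = 0 := by
  have h := sum_descFactorial_mul_eval n 1 x
  simp only [Nat.descFactorial_one] at h
  rw [sum_congr rfl fun ν _ => sub_mul .., sum_sub_distrib, h, ← mul_sum, sum_eval]
  ring

theorem sum_sub_sq_mul_eval (n : ℕ) (x : R) :
    ∑ ν ∈ range (n + 1), ((ν : R) - n * x) ^ 2 * (bernsteinPolynomial R n ν).eval x =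
      n * x * (1 - x) := by
  have key (ν : ℕ) : ((ν : R) - n * x) ^ 2 =
      ν.descFactorial 2 + (1 - 2 * n * x) * ν.descFactorial 1 + (n * x) ^ 2 := by
    simp only [Nat.cast_descFactorial_eq_prod_range, prod_range_succ, prod_range_zero]
    push_cast; ring
  simp only [key, add_mul, sum_add_distrib, mul_assoc, ← mul_sum, sum_descFactorial_mul_eval,
    sum_eval]
  simp only [Nat.cast_descFactorial_eq_prod_range, prod_range_succ, prod_range_zero]
  push_cast; ring

theorem sum_sub_pow_four_mul_eval (n : ℕ) (x : R) :
    ∑ ν ∈ range (n + 1), ((ν : R) - n * x) ^ 4 * (bernsteinPolynomial R n ν).eval x =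
      3 * n * (n - 2) * (x * (1 - x)) ^ 2 + n * (x * (1 - x)) := by
  have key (ν : ℕ) : ((ν : R) - n * x) ^ 4 =
      ν.descFactorial 4 + (6 - 4 * n * x) * ν.descFactorial 3
        + (7 - 12 * n * x + 6 * (n * x) ^ 2) * ν.descFactorial 2
        + (1 - 4 * n * x + 6 * (n * x) ^ 2 - 4 * (n * x) ^ 3) * ν.descFactorial 1
        + (n * x) ^ 4 := by
    simp only [Nat.cast_descFactorial_eq_prod_range, prod_range_succ, prod_range_zero]
    push_cast; ring
  simp only [key, add_mul, sum_add_distrib, mul_assoc, ← mul_sum, sum_descFactorial_mul_eval,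
    sum_eval]
  simp only [Nat.cast_descFactorial_eq_prod_range, prod_range_succ, prod_range_zero]
  push_cast; ring

theorem eval_nonneg (n ν : ℕ) {x : ℝ} (hx : x ∈ Icc (0 : ℝ) 1) :
    0 ≤ (bernsteinPolynomial ℝ n ν).eval x := by
  have := hx.1
  have := sub_nonneg.2 hx.2
  rw [eval_eq]
  positivity

variable {n : ℕ}

theorem sum_div_sub_mul_eval (hn : n ≠ 0) (x : ℝ) :
    ∑ ν ∈ range (n + 1), ((ν : ℝ) / n - x) * (bernsteinPolynomial ℝ n ν).eval x = 0 := by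
  have hn' : (n : ℝ) ≠ 0 := Nat.cast_ne_zero.2 hn
  have h (ν : ℕ) : ((ν : ℝ) / n - x) * (bernsteinPolynomial ℝ n ν).eval x =
      (n : ℝ)⁻¹ * (((ν : ℝ) - n * x) * (bernsteinPolynomial ℝ n ν).eval x) := by
    field_simp
  simp only [h, ← mul_sum, sum_sub_mul_eval, mul_zero]

theorem sum_div_sub_sq_mul_eval (hn : n ≠ 0) (x : ℝ) :
    ∑ ν ∈ range (n + 1), ((ν : ℝ) / n - x) ^ 2 * (bernsteinPolynomial ℝ n ν).eval x =
      x * (1 - x) / n := by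
  have hn' : (n : ℝ) ≠ 0 := Nat.cast_ne_zero.2 hn
  have h (ν : ℕ) : ((ν : ℝ) / n - x) ^ 2 * (bernsteinPolynomial ℝ n ν).eval x =
      ((n : ℝ) ^ 2)⁻¹ * (((ν : ℝ) - n * x) ^ 2 * (bernsteinPolynomial ℝ n ν).eval x) := by
    field_simp
  simp only [h, ← mul_sum, sum_sub_sq_mul_eval]
  field_simp

theorem sum_div_sub_pow_four_mul_eval_le (hn : n ≠ 0) {x : ℝ} (hx : x ∈ Icc (0 : ℝ) 1) :
    ∑ ν ∈ range (n + 1), ((ν : ℝ) / n - x) ^ 4 * (bernsteinPolynomial ℝ n ν).eval x ≤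
      1 / n ^ 2 := by
  have hn' : (1 : ℝ) ≤ n := Nat.one_le_cast.2 (Nat.one_le_iff_ne_zero.2 hn)
  have h (ν : ℕ) : ((ν : ℝ) / n - x) ^ 4 * (bernsteinPolynomial ℝ n ν).eval x =
      ((n : ℝ) ^ 4)⁻¹ * (((ν : ℝ) - n * x) ^ 4 * (bernsteinPolynomial ℝ n ν).eval x) := by
    field_simp
  simp only [h, ← mul_sum, sum_sub_pow_four_mul_eval]
  have hq : 0 ≤ x * (1 - x) := mul_nonneg hx.1 (sub_nonneg.2 hx.2)
  have hq' : x * (1 - x) ≤ 1 / 4 := by nlinarith [sq_nonneg (x - 1 / 2)]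
  rw [inv_mul_le_iff₀ (by positivity), show (n : ℝ) ^ 4 * (1 / n ^ 2) = n ^ 2 by field_simp]
  nlinarith [mul_le_mul hq' hq' hq (by norm_num : (0 : ℝ) ≤ 1 / 4)]

theorem mul_sum_eval_sub_eq (hn : n ≠ 0) (g : ℝ → ℝ) (x a c : ℝ) :
    n * (∑ ν ∈ range (n + 1), g (ν / n) * (bernsteinPolynomial ℝ n ν).eval x - g x) =
      x * (1 - x) * c / 2 + n * ∑ ν ∈ range (n + 1),
        (g (ν / n) - g x - a * (ν / n - x) - c / 2 * (ν / n - x) ^ 2) *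
          (bernsteinPolynomial ℝ n ν).eval x := by
  have hn' : (n : ℝ) ≠ 0 := Nat.cast_ne_zero.2 hn
  have h (ν : ℕ) : (g (ν / n) - g x - a * (ν / n - x) - c / 2 * (ν / n - x) ^ 2) *
      (bernsteinPolynomial ℝ n ν).eval x =
        g (ν / n) * (bernsteinPolynomial ℝ n ν).eval x - g x * (bernsteinPolynomial ℝ n ν).eval x
          - a * ((ν / n - x) * (bernsteinPolynomial ℝ n ν).eval x)
          - c / 2 * ((ν / n - x) ^ 2 * (bernsteinPolynomial ℝ n ν).eval x) := by
    ring
  simp only [h, sum_sub_distrib, ← mul_sum, sum_eval,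
    sum_div_sub_mul_eval hn, sum_div_sub_sq_mul_eval hn]
  field_simp
  ring

end bernsteinPolynomial

theorem isLittleO_taylor_two {f f' : ℝ → ℝ} {f'' x : ℝ}
    (hf : ∀ᶠ y in 𝓝 x, HasDerivAt f (f' y) y) (hf' : HasDerivAt f' f'' x) :
    (fun y => f y - f x - f' x * (y - x) - f'' / 2 * (y - x) ^ 2) =o[𝓝 x]
      fun y => (y - x) ^ 2 := by
  obtain ⟨δ, hδ, hball⟩ := Metric.eventually_nhds_iff_ball.1 hf
  have hderiv : ∀ t ∈ Metric.ball x δ, HasDerivWithinAt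
      (fun y => f y - f' x * (y - x) - f'' / 2 * (y - x) ^ 2)
      (f' t - f' x - f'' * (t - x)) (Metric.ball x δ) t := fun t ht => by
    exact ((((hball t ht).sub (((hasDerivAt_id t).sub_const x).const_mul (f' x))).sub
      ((((hasDerivAt_id t).sub_const x).pow 2).const_mul (f'' / 2))).congr_deriv
        (by simp; ring)).hasDerivWithinAt
  have hsmall : (fun t => f' t - f' x - f'' * (t - x)) =o[𝓝[Metric.ball x δ] x]
      fun t => (t - x) ^ 1 := by
    rw [Metric.isOpen_ball.nhdsWithin_eq (Metric.mem_ball_self hδ)]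
    simpa [mul_comm] using hf'.isLittleO
  have := (convex_ball x δ).isLittleO_pow_succ_real (Metric.mem_ball_self hδ) hderiv hsmall
  rw [Metric.isOpen_ball.nhdsWithin_eq (Metric.mem_ball_self hδ)] at this
  exact this.congr_left fun y => by ring

theorem exists_abs_le_mul_sq_add_mul_pow_four {g : ℝ → ℝ} {x K ε : ℝ} {s : Set ℝ}
    (hg : g =o[𝓝 x] fun y => (y - x) ^ 2) (hK : ∀ y ∈ s, |g y| ≤ K) (hε : 0 < ε) :
    ∃ C, 0 ≤ C ∧ ∀ y ∈ s, |g y| ≤ ε * (y - x) ^ 2 + C * (y - x) ^ 4 := by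
  obtain ⟨δ, hδ, hnear⟩ := Metric.eventually_nhds_iff.1 (hg.def hε)
  refine ⟨|K| / δ ^ 4, by positivity, fun y hy => ?_⟩
  rcases lt_or_ge |y - x| δ with hyx | hyx
  · have hy : |g y| ≤ ε * (y - x) ^ 2 := by
      simpa only [Real.norm_eq_abs, abs_pow, sq_abs] using hnear (show dist y x < δ from hyx)
    have : 0 ≤ |K| / δ ^ 4 * (y - x) ^ 4 := by positivity
    linarith
  · have h4 : δ ^ 4 ≤ (y - x) ^ 4 := by
      simpa only [Even.pow_abs (by decide : Even 4)] using pow_le_pow_left₀ hδ.le hyx 4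
    calc |g y| ≤ |K| := (hK y hy).trans (le_abs_self K)
      _ = |K| / δ ^ 4 * δ ^ 4 := by field_simp
      _ ≤ |K| / δ ^ 4 * (y - x) ^ 4 := by gcongr
      _ ≤ ε * (y - x) ^ 2 + |K| / δ ^ 4 * (y - x) ^ 4 := le_add_of_nonneg_left (by positivity)

theorem abs_mul_sum_eval_le {g : ℝ → ℝ} {x ε C : ℝ} (hx : x ∈ Icc (0 : ℝ) 1) (hC : 0 ≤ C)
    (hg : ∀ y ∈ Icc (0 : ℝ) 1, |g y| ≤ ε * (y - x) ^ 2 + C * (y - x) ^ 4)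
    {n : ℕ} (hn : n ≠ 0) :
    |n * ∑ ν ∈ range (n + 1), g (ν / n) * (bernsteinPolynomial ℝ n ν).eval x| ≤
      ε * (x * (1 - x)) + C / n := by
  have hn' : (0 : ℝ) < n := Nat.cast_pos.2 (Nat.pos_of_ne_zero hn)
  have hnode (ν : ℕ) (hν : ν ∈ range (n + 1)) : (ν : ℝ) / n ∈ Icc (0 : ℝ) 1 :=
    ⟨by positivity, div_le_one_of_le₀ (by exact_mod_cast Nat.lt_succ_iff.1 (mem_range.1 hν))
      hn'.le⟩
  calc |n * ∑ ν ∈ range (n + 1), g (ν / n) * (bernsteinPolynomial ℝ n ν).eval x|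
      ≤ n * ∑ ν ∈ range (n + 1), |g (ν / n)| * (bernsteinPolynomial ℝ n ν).eval x := by
        rw [abs_mul, Nat.abs_cast]
        gcongr
        refine (abs_sum_le_sum_abs _ _).trans_eq (sum_congr rfl fun ν _ => ?_)
        rw [abs_mul, abs_of_nonneg (bernsteinPolynomial.eval_nonneg n ν hx)]
    _ ≤ n * ∑ ν ∈ range (n + 1),
          (ε * ((ν : ℝ) / n - x) ^ 2 + C * ((ν : ℝ) / n - x) ^ 4) *
            (bernsteinPolynomial ℝ n ν).eval x := by
        gcongr with ν hν
        · exact bernsteinPolynomial.eval_nonneg n ν hx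
        · exact hg _ (hnode ν hν)
    _ = n * (ε * (x * (1 - x) / n) + C * ∑ ν ∈ range (n + 1),
          ((ν : ℝ) / n - x) ^ 4 * (bernsteinPolynomial ℝ n ν).eval x) := by
        simp only [add_mul, mul_assoc, sum_add_distrib, ← mul_sum,
          bernsteinPolynomial.sum_div_sub_sq_mul_eval hn]
    _ ≤ n * (ε * (x * (1 - x) / n) + C * (1 / n ^ 2)) := by
        gcongr
        exact bernsteinPolynomial.sum_div_sub_pow_four_mul_eval_le hn hx
    _ = ε * (x * (1 - x)) + C / n := by
        field_simp

theorem tendsto_mul_sum_eval_of_isLittleO {g : ℝ → ℝ} {x : ℝ} (hx : x ∈ Icc (0 : ℝ) 1)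
    (hg : g =o[𝓝 x] fun y => (y - x) ^ 2) (hbdd : ∃ K, ∀ y ∈ Icc (0 : ℝ) 1, |g y| ≤ K) :
    Tendsto (fun n : ℕ => n * ∑ ν ∈ range (n + 1), g (ν / n) * (bernsteinPolynomial ℝ n ν).eval x)
      atTop (𝓝 0) := by
  obtain ⟨K, hK⟩ := hbdd
  rw [Metric.tendsto_nhds]
  intro ε hε
  obtain ⟨C, hC, hgC⟩ := exists_abs_le_mul_sq_add_mul_pow_four hg hK (half_pos hε)
  have hq : x * (1 - x) ≤ 1 := by nlinarith [hx.1, hx.2]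
  filter_upwards [eventually_ne_atTop 0,
    (tendsto_const_div_atTop_nhds_zero_nat C).eventually (gt_mem_nhds (half_pos hε))]
    with n hn hCn
  rw [Real.dist_eq, sub_zero]
  calc _ ≤ ε / 2 * (x * (1 - x)) + C / n := abs_mul_sum_eval_le hx hC hgC hn
    _ < ε := by nlinarith

/-- Voronovskaya's theorem: if `f` is bounded on `[0,1]`, differentiable in a
neighborhood of `x` with derivative `f'`, and `f'` has derivative `f''x` at `x`,
then `n · (Bₙ(f,x) − f(x)) → x(1−x) f''(x)/2`. -/
theorem stmt_3 (f f' : ℝ → ℝ) (f''x : ℝ) (x : ℝ)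
    (hx : x ∈ Icc (0:ℝ) 1)
    (hbdd : ∃ M, ∀ y ∈ Icc (0:ℝ) 1, |f y| ≤ M)
    (hderiv : ∀ᶠ y in nhds x, HasDerivAt f (f' y) y)
    (hderiv2 : HasDerivAt f' f''x x) :
    Tendsto
      (fun n : ℕ =>
        (n : ℝ) *
          ((∑ i ∈ Finset.range (n + 1),
              (n.choose i : ℝ) * f ((i : ℝ) / n) * x ^ i * (1 - x) ^ (n - i)) - f x))
      atTop (nhds (x * (1 - x) * f''x / 2)) := by
  set p : ℝ → ℝ := fun y => f x + f' x * (y - x) + f''x / 2 * (y - x) ^ 2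
  have hremainder_bdd : ∃ K, ∀ y ∈ Icc (0 : ℝ) 1, |f y - p y| ≤ K := by
    obtain ⟨M, hM⟩ := hbdd
    obtain ⟨C, hC⟩ := isCompact_Icc.exists_bound_of_continuousOn (f := p) (by fun_prop)
    exact ⟨M + C, fun y hy => (abs_sub _ _).trans (add_le_add (hM y hy) (hC y hy))⟩
  have hremainder : (fun y => f y - p y) =o[𝓝 x] fun y => (y - x) ^ 2 :=
    (isLittleO_taylor_two hderiv hderiv2).congr_left fun y => by ring
  have hlim := (tendsto_mul_sum_eval_of_isLittleO hx hremainder hremainder_bdd).const_add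
    (x * (1 - x) * f''x / 2)
  rw [add_zero] at hlim
  refine hlim.congr' ?_
  filter_upwards [eventually_ne_atTop 0] with n hn
  have hB : ∑ i ∈ range (n + 1), (n.choose i : ℝ) * f (i / n) * x ^ i * (1 - x) ^ (n - i) =
      ∑ i ∈ range (n + 1), f (i / n) * (bernsteinPolynomial ℝ n i).eval x :=
    sum_congr rfl fun i _ => by rw [bernsteinPolynomial.eval_eq]; ring
  rw [hB, bernsteinPolynomial.mul_sum_eval_sub_eq hn f x (f' x) f''x]
  congr! 4 with ν
  ring
end

section
/- Fix 1 ≤ p ≤ 2 and a constant C_p > 0. Suppose (r_i)_{i≥0} is a sequence of nonnegative reals with r_i ≤ 2 for all i and r_i · i^{p/2} → C_p as i → ∞. Define H_n(x) = Σ_{i=0}^n C(n,i) r_i x^{i+p} (1−x)^{n−i}. Then for every x ∈ [0,1], H_n(x) − C_p (x/n)^{p/2} = o(n^{−p/2}) uniformly in x; i.e., sup_{x∈[0,1]} n^{p/2} |H_n(x) − C_p (x/n)^{p/2}| → 0 as n → ∞. -/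
open Filter Set

noncomputable def bw (n i : ℕ) (x : ℝ) : ℝ := (n.choose i : ℝ) * x ^ i * (1 - x) ^ (n - i)

lemma bw_nonneg {n i : ℕ} {x : ℝ} (h0 : 0 ≤ x) (h1 : x ≤ 1) : 0 ≤ bw n i x := by
  have h2 : (0:ℝ) ≤ 1 - x := by linarith
  unfold bw; positivity

lemma bw_eval (n i : ℕ) (x : ℝ) :
    Polynomial.eval x (bernsteinPolynomial ℝ n i) = bw n i x := by
  simp [bernsteinPolynomial, bw]

lemma bw_sum (n : ℕ) (x : ℝ) : ∑ i ∈ Finset.range (n + 1), bw n i x = 1 := by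
  have := congrArg (Polynomial.eval x) (bernsteinPolynomial.sum ℝ n)
  simpa [Polynomial.eval_finset_sum, bw_eval] using this

lemma bw_var (n : ℕ) (x : ℝ) :
    ∑ i ∈ Finset.range (n + 1), ((i:ℝ) - n * x) ^ 2 * bw n i x = n * x * (1 - x) := by
  have := congrArg (Polynomial.eval x) (bernsteinPolynomial.variance ℝ n)
  simp only [Polynomial.eval_finset_sum, Polynomial.eval_mul, Polynomial.eval_pow,
    Polynomial.eval_sub, Polynomial.eval_smul, Polynomial.eval_natCast, Polynomial.eval_X,
    Polynomial.eval_one, bw_eval, nsmul_eq_mul] at this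
  rw [← this]
  apply Finset.sum_congr rfl
  intro i _
  ring

lemma bw_cheb (n : ℕ) (x c : ℝ) (h0 : 0 ≤ x) (h1 : x ≤ 1) (hc : 0 < c)
    (s : Finset ℕ) (hs : s ⊆ Finset.range (n + 1))
    (hfar : ∀ i ∈ s, c ≤ |(i:ℝ) - n * x|) :
    ∑ i ∈ s, bw n i x ≤ n * x * (1 - x) / c ^ 2 := by
  rw [le_div_iff₀ (by positivity)]
  calc (∑ i ∈ s, bw n i x) * c ^ 2 ≤ ∑ i ∈ s, ((i:ℝ) - n * x) ^ 2 * bw n i x := by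
        rw [Finset.sum_mul]
        apply Finset.sum_le_sum
        intro i hi
        have h := hfar i hi
        have hb := bw_nonneg (n := n) (i := i) h0 h1
        have h2 : c ^ 2 ≤ ((i:ℝ) - n * x) ^ 2 := by
          have := sq_abs ((i:ℝ) - n * x)
          nlinarith [abs_nonneg ((i:ℝ) - n * x)]
        nlinarith
    _ ≤ ∑ i ∈ Finset.range (n+1), ((i:ℝ) - n * x) ^ 2 * bw n i x := by
        apply Finset.sum_le_sum_of_subset_of_nonneg hs
        intro i _ _
        have hb := bw_nonneg (n := n) (i := i) h0 h1
        positivity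
    _ = n * x * (1 - x) := bw_var n x

lemma choose_id (n i : ℕ) :
    ((n:ℝ)+1) * ((n:ℝ)+2) * (n.choose i : ℝ) = ((i:ℝ)+1) * ((i:ℝ)+2) * ((n+2).choose (i+2) : ℝ) := by
  have h1 : (n+1) * n.choose i = (n+1).choose (i+1) * (i+1) := Nat.add_one_mul_choose_eq n i
  have h2 : (n+2) * (n+1).choose (i+1) = (n+2).choose (i+2) * (i+2) := Nat.add_one_mul_choose_eq (n+1) (i+1)
  have key : (n+1) * (n+2) * n.choose i = (i+1) * (i+2) * (n+2).choose (i+2) := by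
    calc (n+1) * (n+2) * n.choose i = (n+2) * ((n+1) * n.choose i) := by ring
    _ = (n+2) * ((n+1).choose (i+1) * (i+1)) := by rw [h1]
    _ = ((n+2) * (n+1).choose (i+1)) * (i+1) := by ring
    _ = ((n+2).choose (i+2) * (i+2)) * (i+1) := by rw [h2]
    _ = (i+1) * (i+2) * (n+2).choose (i+2) := by ring
  have := congrArg (fun m : ℕ => (m : ℝ)) key
  push_cast at this
  linarith

lemma bw_invmom (n : ℕ) (x : ℝ) (h0 : 0 ≤ x) (h1 : x ≤ 1) :
    ∑ i ∈ Finset.range (n + 1),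
      bw n i x * (((n:ℝ)+1) * ((n:ℝ)+2) * x ^ 2 / (((i:ℝ)+1) * ((i:ℝ)+2))) ≤ 1 := by
  have key : ∀ i, bw n i x * (((n:ℝ)+1) * ((n:ℝ)+2) * x ^ 2 / (((i:ℝ)+1) * ((i:ℝ)+2)))
      = bw (n+2) (i+2) x := by
    intro i
    have hi1 : (((i:ℝ)+1) * ((i:ℝ)+2)) ≠ 0 := by positivity
    have hc := choose_id n i
    unfold bw
    have hsub : (n + 2) - (i + 2) = n - i := by omega
    rw [hsub, pow_add]
    field_simp
    linear_combination (x ^ i * x ^ 2 * (1 - x) ^ (n - i)) * hc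
  calc ∑ i ∈ Finset.range (n + 1),
        bw n i x * (((n:ℝ)+1) * ((n:ℝ)+2) * x ^ 2 / (((i:ℝ)+1) * ((i:ℝ)+2)))
      = ∑ i ∈ Finset.range (n + 1), bw (n+2) (i+2) x :=
        Finset.sum_congr rfl fun i _ => key i
    _ = ∑ j ∈ Finset.Ico 2 (n + 3), bw (n+2) j x := by
        rw [Finset.sum_Ico_eq_sum_range]
        apply Finset.sum_congr (by congr 1) 
        intro i _
        rw [add_comm 2 i]
    _ ≤ ∑ j ∈ Finset.range (n + 3), bw (n+2) j x := by
        apply Finset.sum_le_sum_of_subset_of_nonneg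
        · intro j hj
          simp only [Finset.mem_Ico] at hj
          simp only [Finset.mem_range]
          omega
        · intro j _ _
          exact bw_nonneg h0 h1
    _ = 1 := bw_sum (n+2) x

-- small analytic helpers
lemma rpow_le_one_add_sq {t p : ℝ} (ht : 0 ≤ t) (hp1 : 1 ≤ p) (hp2 : p ≤ 2) :
    t ^ p ≤ 1 + t ^ 2 := by
  rcases le_or_gt t 1 with h | h
  · have : t ^ p ≤ 1 := Real.rpow_le_one ht h (by linarith)
    nlinarith [sq_nonneg t]
  · have h1 : t ^ p ≤ t ^ (2:ℝ) := Real.rpow_le_rpow_of_exponent_le h.le hp2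
    have h2 : t ^ (2:ℝ) = t ^ 2 := by
      rw [show (2:ℝ) = ((2:ℕ):ℝ) by norm_num, Real.rpow_natCast]
    rw [← h2]
    have := Real.rpow_nonneg ht (2:ℝ)
    linarith

lemma rpow_mul_exp_neg_le {t p : ℝ} (ht : 0 ≤ t) (hp1 : 1 ≤ p) (hp2 : p ≤ 2) :
    t ^ p * Real.exp (-t) ≤ 5 := by
  have h1 : t ^ p ≤ 1 + t ^ 2 := rpow_le_one_add_sq ht hp1 hp2
  have h2 : t / 2 ≤ Real.exp (t / 2) := by
    have := Real.add_one_le_exp (t / 2); linarith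
  have h3 : (t / 2) ^ 2 ≤ Real.exp (t / 2) ^ 2 := by
    apply pow_le_pow_left₀ (by positivity) h2 2
  have h4 : Real.exp (t / 2) ^ 2 = Real.exp t := by
    rw [sq, ← Real.exp_add]; ring_nf
  have h5 : (1:ℝ) ≤ Real.exp t := Real.one_le_exp (by linarith)
  have h6 : t ^ p ≤ 5 * Real.exp t := by nlinarith
  have h7 : Real.exp (-t) = (Real.exp t)⁻¹ := Real.exp_neg t
  rw [h7]
  rw [mul_inv_le_iff₀ (Real.exp_pos t)]
  linarith [h6]

lemma one_sub_pow_le_exp {x : ℝ} (h0 : 0 ≤ x) (h1 : x ≤ 1) (n : ℕ) :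
    (1 - x) ^ n ≤ Real.exp (-((n:ℝ) * x)) := by
  have hb : 1 - x ≤ Real.exp (-x) := by have := Real.add_one_le_exp (-x); linarith
  calc (1 - x) ^ n ≤ Real.exp (-x) ^ n := pow_le_pow_left₀ (by linarith) hb n
    _ = Real.exp (-((n:ℝ) * x)) := by
        rw [← Real.exp_nat_mul]; ring_nf

lemma bw_E2 (n : ℕ) (x : ℝ) (h0 : 0 < x) (h1 : x ≤ 1) :
    ∑ i ∈ Finset.Ico 1 (n+1), bw n i x * ((n:ℝ) * x / (i:ℝ)) ^ 2 ≤ 6 := by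
  have key : ∀ i ∈ Finset.Ico 1 (n+1),
      bw n i x * ((n:ℝ) * x / (i:ℝ)) ^ 2
        ≤ 6 * (bw n i x * (((n:ℝ)+1) * ((n:ℝ)+2) * x ^ 2 / (((i:ℝ)+1) * ((i:ℝ)+2)))) := by
    intro i hi
    simp only [Finset.mem_Ico] at hi
    have hi1 : (1:ℝ) ≤ (i:ℝ) := by exact_mod_cast hi.1
    have hb := bw_nonneg (n := n) (i := i) h0.le h1
    have hn0 : (0:ℝ) ≤ (n:ℝ) := Nat.cast_nonneg n
    have hfrac : ((n:ℝ) * x / (i:ℝ)) ^ 2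
        ≤ 6 * (((n:ℝ)+1) * ((n:ℝ)+2) * x ^ 2 / (((i:ℝ)+1) * ((i:ℝ)+2))) := by
      rw [div_pow, ← mul_div_assoc, div_le_div_iff₀ (by positivity) (by positivity)]
      have e1 : ((i:ℝ)+1) * ((i:ℝ)+2) ≤ 6 * (i:ℝ)^2 := by nlinarith
      have e2 : (n:ℝ)^2 * x^2 ≤ ((n:ℝ)+1) * ((n:ℝ)+2) * x^2 := by nlinarith [sq_nonneg x]
      have c1 : ((n:ℝ)*x)^2 * (((i:ℝ)+1) * ((i:ℝ)+2)) ≤ ((n:ℝ)*x)^2 * (6 * (i:ℝ)^2) :=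
        mul_le_mul_of_nonneg_left e1 (by positivity)
      have c2 : ((n:ℝ)^2 * x^2) * (6 * (i:ℝ)^2) ≤ (((n:ℝ)+1) * ((n:ℝ)+2) * x^2) * (6 * (i:ℝ)^2) :=
        mul_le_mul_of_nonneg_right e2 (by positivity)
      nlinarith [c1, c2]
    calc bw n i x * ((n:ℝ) * x / (i:ℝ)) ^ 2
        ≤ bw n i x * (6 * (((n:ℝ)+1) * ((n:ℝ)+2) * x ^ 2 / (((i:ℝ)+1) * ((i:ℝ)+2)))) :=
          mul_le_mul_of_nonneg_left hfrac hb
      _ = 6 * (bw n i x * (((n:ℝ)+1) * ((n:ℝ)+2) * x ^ 2 / (((i:ℝ)+1) * ((i:ℝ)+2)))) := by ring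
  calc ∑ i ∈ Finset.Ico 1 (n+1), bw n i x * ((n:ℝ) * x / (i:ℝ)) ^ 2
      ≤ ∑ i ∈ Finset.Ico 1 (n+1),
          6 * (bw n i x * (((n:ℝ)+1) * ((n:ℝ)+2) * x ^ 2 / (((i:ℝ)+1) * ((i:ℝ)+2)))) :=
        Finset.sum_le_sum key
    _ = 6 * ∑ i ∈ Finset.Ico 1 (n+1),
          bw n i x * (((n:ℝ)+1) * ((n:ℝ)+2) * x ^ 2 / (((i:ℝ)+1) * ((i:ℝ)+2))) := by
        rw [Finset.mul_sum]
    _ ≤ 6 * ∑ i ∈ Finset.range (n+1),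
          bw n i x * (((n:ℝ)+1) * ((n:ℝ)+2) * x ^ 2 / (((i:ℝ)+1) * ((i:ℝ)+2))) := by
        apply mul_le_mul_of_nonneg_left ?_ (by norm_num)
        apply Finset.sum_le_sum_of_subset_of_nonneg
        · intro j hj; simp only [Finset.mem_Ico] at hj; simp only [Finset.mem_range]; omega
        · intro j _ _
          have hb := bw_nonneg (n := n) (i := j) h0.le h1
          positivity
    _ ≤ 6 * 1 := by
        apply mul_le_mul_of_nonneg_left (bw_invmom n x h0.le h1) (by norm_num)
    _ = 6 := by norm_num
set_option maxHeartbeats 1000000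

lemma pointwise (p Cp q : ℝ) (hp1 : 1 ≤ p) (hp2 : p ≤ 2) (hq : q = p/2) (hCp : 0 < Cp)
    (r : ℕ → ℝ) (hr0 : ∀ i, 0 ≤ r i) (hr2 : ∀ i, r i ≤ 2)
    (δ : ℝ) (hδ : 0 < δ)
    (ε' η M K : ℝ) (N : ℕ)
    (hε'0 : 0 ≤ ε') (hε'1 : ε' ≤ Cp) (hε'δ : ε' ≤ δ)
    (hη0 : 0 < η) (hη2 : η ≤ 1/2) (hηδ : 4*Cp*η ≤ δ)
    (hM2 : 2 ≤ M) (hM : ∀ i : ℕ, r i * (i:ℝ)^q ≤ M)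
    (hN : ∀ i : ℕ, N ≤ i → |r i * (i:ℝ)^q - Cp| ≤ ε')
    (hK1 : 1 ≤ K) (hKN : 2*(N:ℝ) ≤ K)
    (hK3 : M * (3 * Real.sqrt (1/(η^2*K))) ≤ δ) (hK4 : Cp * (1/(η^2*K)) ≤ δ)
    (n : ℕ) (hn1 : 1 ≤ n)
    (hnK : (2*K^2 + Cp*K + 10) * (n:ℝ)^(-q) ≤ δ)
    (x : ℝ) (hx0 : 0 ≤ x) (hx1 : x ≤ 1) :
    (n : ℝ) ^ q *
      |(∑ i ∈ Finset.range (n + 1),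
          (n.choose i : ℝ) * r i * x ^ ((i : ℝ) + p) * (1 - x) ^ (n - i))
        - Cp * (x / n) ^ q| ≤ 6 * δ := by
  classical
  have hq0 : 0 < q := by rw [hq]; linarith
  have hq1 : q ≤ 1 := by rw [hq]; linarith
  have hn0 : (0:ℝ) < (n:ℝ) := by exact_mod_cast hn1
  rcases eq_or_lt_of_le hx0 with hx | hx
  · -- x = 0
    have hx' : x = 0 := hx.symm
    subst hx'
    have hs : ∀ i ∈ Finset.range (n+1),
        (n.choose i : ℝ) * r i * (0:ℝ) ^ ((i : ℝ) + p) * (1 - (0:ℝ)) ^ (n - i) = 0 := by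
      intro i _
      have : ((i:ℝ) + p) ≠ 0 := by positivity
      rw [Real.zero_rpow this]; ring
    rw [Finset.sum_congr rfl hs, Finset.sum_const_zero]
    rw [zero_div, Real.zero_rpow (ne_of_gt hq0)]
    simp
    positivity
  · -- x > 0
    have hxq1 : x ^ q ≤ 1 := Real.rpow_le_one hx0 hx1 hq0.le
    have hxq0 : 0 ≤ x ^ q := Real.rpow_nonneg hx0 q
    have hnq0 : (0:ℝ) < (n:ℝ) ^ q := Real.rpow_pos_of_pos hn0 q
    -- rewrite the sum
    have hsum_rw : (n:ℝ) ^ q * (∑ i ∈ Finset.range (n + 1),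
        (n.choose i : ℝ) * r i * x ^ ((i : ℝ) + p) * (1 - x) ^ (n - i))
        = ∑ i ∈ Finset.range (n + 1), bw n i x * (x ^ p * (n:ℝ) ^ q * r i) := by
      rw [Finset.mul_sum]
      refine Finset.sum_congr rfl fun i _ => ?_
      have hxi : x ^ ((i:ℝ) + p) = x ^ i * x ^ p := by
        rw [Real.rpow_add hx, Real.rpow_natCast]
      rw [hxi]
      unfold bw
      ring
    have hc_rw : (n:ℝ) ^ q * (Cp * (x / n) ^ q) = Cp * x ^ q := by
      rw [Real.div_rpow hx0 hn0.le]
      field_simp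
    have habs : (n : ℝ) ^ q * |(∑ i ∈ Finset.range (n + 1),
          (n.choose i : ℝ) * r i * x ^ ((i : ℝ) + p) * (1 - x) ^ (n - i)) - Cp * (x / n) ^ q|
        = |∑ i ∈ Finset.range (n + 1),
            bw n i x * (x ^ p * (n:ℝ) ^ q * r i - Cp * x ^ q)| := by
      have step : (n:ℝ) ^ q * |(∑ i ∈ Finset.range (n + 1),
          (n.choose i : ℝ) * r i * x ^ ((i : ℝ) + p) * (1 - x) ^ (n - i)) - Cp * (x / n) ^ q|
          = |(n:ℝ) ^ q * ((∑ i ∈ Finset.range (n + 1),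
          (n.choose i : ℝ) * r i * x ^ ((i : ℝ) + p) * (1 - x) ^ (n - i)) - Cp * (x / n) ^ q)| := by
        rw [abs_mul, abs_of_nonneg hnq0.le]
      rw [step, mul_sub, hsum_rw, hc_rw]
      congr 1
      simp only [mul_sub]
      rw [Finset.sum_sub_distrib, ← Finset.sum_mul, bw_sum, one_mul]
    rw [habs]
    have habs2 : |∑ i ∈ Finset.range (n + 1),
          bw n i x * (x ^ p * (n:ℝ) ^ q * r i - Cp * x ^ q)|
        ≤ ∑ i ∈ Finset.range (n + 1),
            bw n i x * |x ^ p * (n:ℝ) ^ q * r i - Cp * x ^ q| := by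
      refine (Finset.abs_sum_le_sum_abs _ _).trans ?_
      refine Finset.sum_le_sum fun i _ => ?_
      rw [abs_mul, abs_of_nonneg (bw_nonneg hx0 hx1)]
    refine habs2.trans ?_
    -- common facts
    have hT0 : ∀ i : ℕ, 0 ≤ x ^ p * (n:ℝ) ^ q * r i := fun i => by
      have := hr0 i; positivity
    have hc0 : 0 ≤ Cp * x ^ q := by positivity
    have htri : ∀ i : ℕ, |x ^ p * (n:ℝ) ^ q * r i - Cp * x ^ q|
        ≤ x ^ p * (n:ℝ) ^ q * r i + Cp * x ^ q := fun i => by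
      rw [abs_le]; constructor <;> [linarith [hT0 i, hc0]; linarith [hT0 i, hc0]]
    have hxp0 : 0 ≤ x ^ p := Real.rpow_nonneg hx0 p
    have hnqneg : (0:ℝ) < (n:ℝ) ^ (-q) := Real.rpow_pos_of_pos hn0 (-q)
    rcases le_or_gt ((n:ℝ) * x) K with hsm | hbg
    · -- small x : n*x ≤ K
      have hxK : x ≤ K / n := by rw [le_div_iff₀ hn0]; linarith [hsm]
      have hbound : ∀ i ∈ Finset.range (n+1),
          bw n i x * |x ^ p * (n:ℝ) ^ q * r i - Cp * x ^ q|
          ≤ bw n i x * (x ^ p * (n:ℝ) ^ q * 2 + Cp * x ^ q) := by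
        intro i _
        refine mul_le_mul_of_nonneg_left ?_ (bw_nonneg hx0 hx1)
        refine (htri i).trans ?_
        have h2 : x ^ p * (n:ℝ) ^ q * r i ≤ x ^ p * (n:ℝ) ^ q * 2 :=
          mul_le_mul_of_nonneg_left (hr2 i) (by positivity)
        linarith
      refine (Finset.sum_le_sum hbound).trans ?_
      rw [← Finset.sum_mul, bw_sum, one_mul]
      -- x^p * n^q ≤ K^2 * n^(-q),  Cp * x^q ≤ Cp * K * n^(-q)
      have hKn0 : (0:ℝ) ≤ K / n := by positivity
      have e1 : x ^ p ≤ (K / n) ^ p := Real.rpow_le_rpow hx0 hxK (by linarith)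
      have np : (n:ℝ) ^ p = (n:ℝ) ^ q * (n:ℝ) ^ q := by
        rw [← Real.rpow_add hn0]; congr 1; rw [hq]; ring
      have e2 : (K / n) ^ p * (n:ℝ) ^ q = K ^ p * (n:ℝ) ^ (-q) := by
        rw [Real.div_rpow (by linarith : (0:ℝ) ≤ K) hn0.le, Real.rpow_neg hn0.le, np]
        field_simp
      have e3 : K ^ p ≤ K ^ 2 := by
        have := Real.rpow_le_rpow_of_exponent_le hK1 hp2
        rw [show (2:ℝ) = ((2:ℕ):ℝ) by norm_num, Real.rpow_natCast] at this
        exact this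
      have e4 : x ^ q ≤ K * (n:ℝ) ^ (-q) := by
        have q1 : x ^ q ≤ (K / n) ^ q := Real.rpow_le_rpow hx0 hxK hq0.le
        have q2 : (K / n) ^ q = K ^ q * (n:ℝ) ^ (-q) := by
          rw [Real.div_rpow (by linarith : (0:ℝ) ≤ K) hn0.le, Real.rpow_neg hn0.le, div_eq_mul_inv]
        have q3 : K ^ q ≤ K := by
          have := Real.rpow_le_rpow_of_exponent_le hK1 hq1
          rwa [Real.rpow_one] at this
        calc x ^ q ≤ K ^ q * (n:ℝ) ^ (-q) := by rw [← q2]; exact q1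
          _ ≤ K * (n:ℝ) ^ (-q) := mul_le_mul_of_nonneg_right q3 hnqneg.le
      have : x ^ p * (n:ℝ) ^ q * 2 + Cp * x ^ q ≤ (2*K^2 + Cp*K) * (n:ℝ) ^ (-q) := by
        have u1 : x ^ p * (n:ℝ) ^ q ≤ K ^ 2 * (n:ℝ) ^ (-q) := by
          calc x ^ p * (n:ℝ) ^ q ≤ (K/n) ^ p * (n:ℝ) ^ q :=
                mul_le_mul_of_nonneg_right e1 hnq0.le
            _ = K ^ p * (n:ℝ) ^ (-q) := e2
            _ ≤ K ^ 2 * (n:ℝ) ^ (-q) := mul_le_mul_of_nonneg_right e3 hnqneg.le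
        have u2 : Cp * x ^ q ≤ Cp * (K * (n:ℝ) ^ (-q)) :=
          mul_le_mul_of_nonneg_left e4 hCp.le
        calc x ^ p * (n:ℝ) ^ q * 2 + Cp * x ^ q
            ≤ K ^ 2 * (n:ℝ) ^ (-q) * 2 + Cp * (K * (n:ℝ) ^ (-q)) := by linarith
          _ = (2*K^2 + Cp*K) * (n:ℝ) ^ (-q) := by ring
      refine this.trans ?_
      calc (2*K^2 + Cp*K) * (n:ℝ) ^ (-q) ≤ (2*K^2 + Cp*K + 10) * (n:ℝ) ^ (-q) :=
            mul_le_mul_of_nonneg_right (by linarith) hnqneg.le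
        _ ≤ δ := hnK
        _ ≤ 6 * δ := by linarith
    · -- big x : n*x > K
      have hnx0 : (0:ℝ) < (n:ℝ) * x := by positivity
      have hKnx : K ≤ (n:ℝ) * x := hbg.le
      have np : (n:ℝ) ^ p = (n:ℝ) ^ q * (n:ℝ) ^ q := by
        rw [← Real.rpow_add hn0]; congr 1; rw [hq]; ring
      have xp2 : x ^ p = x ^ q * x ^ q := by
        rw [← Real.rpow_add hx]; congr 1; rw [hq]; ring
      have h2q : ∀ t : ℝ, 0 ≤ t → (t ^ q) ^ 2 = t ^ p := by
        intro t ht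
        rw [← Real.rpow_natCast (t ^ q) 2, ← Real.rpow_mul ht]
        congr 1
        rw [hq]; push_cast; ring
      have hTi : ∀ i : ℕ, 1 ≤ i →
          x ^ p * (n:ℝ) ^ q * r i
            = x ^ q * (((n:ℝ) * x / (i:ℝ)) ^ q * (r i * (i:ℝ) ^ q)) := by
        intro i hi1
        have hip : (0:ℝ) < (i:ℝ) := by exact_mod_cast hi1
        have hiq : (0:ℝ) < (i:ℝ) ^ q := Real.rpow_pos_of_pos hip q
        rw [Real.div_rpow hnx0.le (Nat.cast_nonneg i), Real.mul_rpow hn0.le hx0, xp2]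
        field_simp
      have hu0 : ∀ i : ℕ, 0 ≤ ((n:ℝ) * x / (i:ℝ)) ^ q := fun i =>
        Real.rpow_nonneg (by positivity) q
      -- split at i = 0
      have hsplit : ∑ i ∈ Finset.range (n+1), bw n i x * |x ^ p * (n:ℝ) ^ q * r i - Cp * x ^ q|
          = bw n 0 x * |x ^ p * (n:ℝ) ^ q * r 0 - Cp * x ^ q|
            + ∑ i ∈ Finset.Ico 1 (n+1), bw n i x * |x ^ p * (n:ℝ) ^ q * r i - Cp * x ^ q| := by
        rw [Finset.range_eq_Ico, Finset.sum_eq_sum_Ico_succ_bot (by omega)]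
      rw [hsplit]
      -- i = 0 term
      have hbw0 : bw n 0 x = (1-x)^n := by simp [bw]
      have hexp : (1-x)^n ≤ Real.exp (-((n:ℝ)*x)) := one_sub_pow_le_exp hx0 hx1 n
      have h1x0 : (0:ℝ) ≤ (1-x)^n := by apply pow_nonneg; linarith
      have hxpnq : x ^ p * (n:ℝ) ^ q = ((n:ℝ)*x) ^ p * (n:ℝ) ^ (-q) := by
        rw [Real.mul_rpow hn0.le hx0, Real.rpow_neg hn0.le, np]
        field_simp
      have hexpK : Real.exp (-((n:ℝ)*x)) ≤ 1/(η^2*K) := by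
        have e1 : Real.exp (-((n:ℝ)*x)) ≤ Real.exp (-K) :=
          Real.exp_le_exp.mpr (by linarith only [hKnx])
        have e2 : K ≤ Real.exp K := by
          have := Real.add_one_le_exp K; linarith only [this]
        have e3 : Real.exp (-K) ≤ 1/K := by
          rw [Real.exp_neg, one_div]
          exact inv_anti₀ (by linarith only [hK1]) e2
        have e4 : (1:ℝ)/K ≤ 1/(η^2*K) := by
          have hη1 : η^2 ≤ 1 := pow_le_one₀ hη0.le (by linarith)
          have h5 : η^2*K ≤ 1*K := mul_le_mul_of_nonneg_right hη1 (by linarith only [hK1])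
          rw [one_mul] at h5
          exact one_div_le_one_div_of_le (by positivity) h5
        linarith only [e1, e3, e4]
      have hterm0 : bw n 0 x * |x ^ p * (n:ℝ) ^ q * r 0 - Cp * x ^ q| ≤ 10 * (n:ℝ)^(-q) + δ := by
        have t1 : |x ^ p * (n:ℝ) ^ q * r 0 - Cp * x ^ q| ≤ x ^ p * (n:ℝ) ^ q * 2 + Cp := by
          refine (htri 0).trans ?_
          have b1 : x ^ p * (n:ℝ) ^ q * r 0 ≤ x ^ p * (n:ℝ) ^ q * 2 :=
            mul_le_mul_of_nonneg_left (hr2 0) (by positivity)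
          have b2 : Cp * x ^ q ≤ Cp := by nlinarith only [hxq1, hCp.le, hxq0]
          linarith only [b1, b2]
        have e6 : (1-x)^n * ((n:ℝ)*x) ^ p ≤ 5 := by
          have e5 : Real.exp (-((n:ℝ)*x)) * ((n:ℝ)*x) ^ p ≤ 5 := by
            rw [mul_comm]
            exact rpow_mul_exp_neg_le hnx0.le hp1 hp2
          have e7 := mul_le_mul_of_nonneg_right hexp (Real.rpow_nonneg hnx0.le p)
          linarith only [e5, e7]
        have t2 : (1-x)^n * (x ^ p * (n:ℝ) ^ q * 2) ≤ 10 * (n:ℝ)^(-q) := by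
          rw [hxpnq]
          calc (1-x)^n * (((n:ℝ)*x) ^ p * (n:ℝ) ^ (-q) * 2)
              = ((1-x)^n * ((n:ℝ)*x) ^ p) * (2 * (n:ℝ) ^ (-q)) := by ring
            _ ≤ 5 * (2 * (n:ℝ) ^ (-q)) :=
                mul_le_mul_of_nonneg_right e6 (by positivity)
            _ = 10 * (n:ℝ)^(-q) := by ring
        have t3 : (1-x)^n * Cp ≤ δ := by
          have : (1-x)^n * Cp ≤ (1/(η^2*K)) * Cp :=
            mul_le_mul_of_nonneg_right (hexp.trans hexpK) hCp.le
          calc (1-x)^n * Cp ≤ (1/(η^2*K)) * Cp := this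
            _ = Cp * (1/(η^2*K)) := by ring
            _ ≤ δ := hK4
        calc bw n 0 x * |x ^ p * (n:ℝ) ^ q * r 0 - Cp * x ^ q|
            ≤ (1-x)^n * (x ^ p * (n:ℝ) ^ q * 2 + Cp) := by
              rw [hbw0]; exact mul_le_mul_of_nonneg_left t1 h1x0
          _ = (1-x)^n * (x ^ p * (n:ℝ) ^ q * 2) + (1-x)^n * Cp := by ring
          _ ≤ 10 * (n:ℝ)^(-q) + δ := add_le_add t2 t3
      -- split Ico into good and bad
      set P : ℕ → Prop := fun i => N ≤ i ∧ |(i:ℝ) - (n:ℝ) * x| ≤ η * ((n:ℝ) * x) with hP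
      have hIco := Finset.sum_filter_add_sum_filter_not (Finset.Ico 1 (n+1)) P
        (fun i => bw n i x * |x ^ p * (n:ℝ) ^ q * r i - Cp * x ^ q|)
      -- GOOD SET
      have hgood : ∑ i ∈ (Finset.Ico 1 (n+1)).filter P,
          bw n i x * |x ^ p * (n:ℝ) ^ q * r i - Cp * x ^ q| ≤ 2*δ := by
        have hb : ∀ i ∈ (Finset.Ico 1 (n+1)).filter P,
            bw n i x * |x ^ p * (n:ℝ) ^ q * r i - Cp * x ^ q| ≤ bw n i x * (2*δ) := by
          intro i hi
          rw [Finset.mem_filter, Finset.mem_Ico] at hi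
          obtain ⟨⟨hi1, hi2⟩, hiN, hinear⟩ := hi
          have hip : (0:ℝ) < (i:ℝ) := by exact_mod_cast hi1
          have habs' := abs_le.mp hinear
          have hAη : (0:ℝ) ≤ 1 - η := by linarith only [hη2]
          have htlo : 1 - η ≤ (n:ℝ)*x/(i:ℝ) := by
            rw [le_div_iff₀ hip]
            have hC := mul_le_mul_of_nonneg_left
              (show (i:ℝ) ≤ (n:ℝ)*x + η*((n:ℝ)*x) by linarith only [habs'.2]) hAη
            have hB : (0:ℝ) ≤ η*η*((n:ℝ)*x) :=
              mul_nonneg (mul_nonneg hη0.le hη0.le) hnx0.le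
            nlinarith only [hC, hB]
          have hthi : (n:ℝ)*x/(i:ℝ) ≤ 1 + 2*η := by
            rw [div_le_iff₀ hip]
            have hD := mul_le_mul_of_nonneg_left
              (show (n:ℝ)*x - η*((n:ℝ)*x) ≤ (i:ℝ) by linarith only [habs'.1])
              (show (0:ℝ) ≤ 1 + 2*η by linarith only [hη0])
            have hE : (0:ℝ) ≤ η*(1-2*η)*((n:ℝ)*x) :=
              mul_nonneg (mul_nonneg hη0.le (by linarith only [hη2])) hnx0.le
            nlinarith only [hD, hE]
          have hu1 : ((n:ℝ)*x/(i:ℝ)) ^ q ≤ 1 + 2*η := by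
            calc ((n:ℝ)*x/(i:ℝ)) ^ q ≤ (1+2*η)^q :=
                  Real.rpow_le_rpow (by positivity) hthi hq0.le
              _ ≤ (1+2*η)^(1:ℝ) :=
                  Real.rpow_le_rpow_of_exponent_le (by linarith only [hη0]) hq1
              _ = 1+2*η := Real.rpow_one _
          have hu2 : 1 - η ≤ ((n:ℝ)*x/(i:ℝ)) ^ q := by
            calc (1:ℝ) - η = (1-η)^(1:ℝ) := (Real.rpow_one _).symm
              _ ≤ (1-η)^q :=
                  Real.rpow_le_rpow_of_exponent_ge (by linarith only [hη2])
                    (by linarith only [hη0]) hq1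
              _ ≤ ((n:ℝ)*x/(i:ℝ)) ^ q :=
                  Real.rpow_le_rpow (by linarith only [hη2]) htlo hq0.le
          have ha := hN i hiN
          have ha' := abs_le.mp ha
          have ha0 : 0 ≤ r i * (i:ℝ)^q :=
            mul_nonneg (hr0 i) (Real.rpow_nonneg hip.le q)
          have key : |((n:ℝ)*x/(i:ℝ)) ^ q * (r i * (i:ℝ)^q) - Cp| ≤ 2*δ := by
            have dec : ((n:ℝ)*x/(i:ℝ)) ^ q * (r i * (i:ℝ)^q) - Cp
                = (r i * (i:ℝ)^q) * (((n:ℝ)*x/(i:ℝ)) ^ q - 1) + (r i * (i:ℝ)^q - Cp) := by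
              ring
            rw [dec]
            refine (abs_add_le _ _).trans ?_
            have k1 : |(r i * (i:ℝ)^q) * (((n:ℝ)*x/(i:ℝ)) ^ q - 1)| ≤ (2*Cp) * (2*η) := by
              rw [abs_mul]
              apply mul_le_mul
              · rw [abs_of_nonneg ha0]; linarith only [ha'.2, hε'1]
              · rw [abs_le]
                constructor
                · linarith only [hu2, hη0]
                · linarith only [hu1, hη0]
              · exact abs_nonneg _
              · positivity
            have k2 : |r i * (i:ℝ)^q - Cp| ≤ δ := ha.trans hε'δ
            calc |(r i * (i:ℝ)^q) * (((n:ℝ)*x/(i:ℝ)) ^ q - 1)| + |r i * (i:ℝ)^q - Cp|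
                ≤ (2*Cp) * (2*η) + δ := add_le_add k1 k2
              _ ≤ δ + δ := by linarith only [hηδ, hε'δ]
              _ = 2*δ := by ring
          have hre : x ^ p * (n:ℝ) ^ q * r i - Cp * x ^ q
              = x ^ q * (((n:ℝ)*x/(i:ℝ)) ^ q * (r i * (i:ℝ)^q) - Cp) := by
            rw [hTi i hi1]; ring
          refine mul_le_mul_of_nonneg_left ?_ (bw_nonneg hx0 hx1)
          rw [hre, abs_mul, abs_of_nonneg hxq0]
          calc x ^ q * |((n:ℝ)*x/(i:ℝ)) ^ q * (r i * (i:ℝ)^q) - Cp|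
              ≤ 1 * (2*δ) := by
                apply mul_le_mul hxq1 key (abs_nonneg _) (by norm_num)
            _ = 2*δ := by ring
        calc ∑ i ∈ (Finset.Ico 1 (n+1)).filter P,
              bw n i x * |x ^ p * (n:ℝ) ^ q * r i - Cp * x ^ q|
            ≤ ∑ i ∈ (Finset.Ico 1 (n+1)).filter P, bw n i x * (2*δ) := Finset.sum_le_sum hb
          _ = (∑ i ∈ (Finset.Ico 1 (n+1)).filter P, bw n i x) * (2*δ) := by
              rw [Finset.sum_mul]
          _ ≤ 1 * (2*δ) := by
              apply mul_le_mul_of_nonneg_right ?_ (by positivity)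
              rw [← bw_sum n x]
              apply Finset.sum_le_sum_of_subset_of_nonneg
              · intro j hj
                rw [Finset.mem_filter, Finset.mem_Ico] at hj
                rw [Finset.mem_range]
                omega
              · intro j _ _
                exact bw_nonneg hx0 hx1
          _ = 2*δ := by ring
      -- BAD SET
      have hbadsub : (Finset.Ico 1 (n+1)).filter (fun i => ¬ P i) ⊆ Finset.range (n+1) := by
        intro j hj
        rw [Finset.mem_filter, Finset.mem_Ico] at hj
        rw [Finset.mem_range]
        omega
      have hfar : ∀ i ∈ (Finset.Ico 1 (n+1)).filter (fun i => ¬ P i),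
          η * ((n:ℝ)*x) ≤ |(i:ℝ) - (n:ℝ)*x| := by
        intro i hi
        rw [Finset.mem_filter, Finset.mem_Ico] at hi
        obtain ⟨⟨hi1, hi2⟩, hnot⟩ := hi
        simp only [hP] at hnot
        push_neg at hnot
        by_cases hNi : N ≤ i
        · exact (hnot hNi).le
        · have hiN : (i:ℝ) ≤ (N:ℝ) := by
            have : i ≤ N := le_of_not_ge hNi
            exact_mod_cast this
          have h1 : η * ((n:ℝ)*x) ≤ (n:ℝ)*x - (i:ℝ) := by
            have hF := mul_le_mul_of_nonneg_right hη2 hnx0.le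
            linarith only [hF, hiN, hKN, hKnx]
          calc η * ((n:ℝ)*x) ≤ (n:ℝ)*x - (i:ℝ) := h1
            _ = -((i:ℝ) - (n:ℝ)*x) := by ring
            _ ≤ |(i:ℝ) - (n:ℝ)*x| := neg_le_abs _
      have hP0 : ∑ i ∈ (Finset.Ico 1 (n+1)).filter (fun i => ¬ P i), bw n i x
          ≤ 1/(η^2*K) := by
        have hc := bw_cheb n x (η*((n:ℝ)*x)) hx0 hx1 (by positivity) _ hbadsub hfar
        refine hc.trans ?_
        rw [div_le_div_iff₀ (by positivity) (by positivity)]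
        have hKx : (1-x)*K ≤ (n:ℝ)*x := by
          have hG : (0:ℝ) ≤ x*K := mul_nonneg hx0 (by linarith only [hK1])
          linarith only [hG, hKnx]
        have hH := mul_le_mul_of_nonneg_left hKx (show (0:ℝ) ≤ η^2*((n:ℝ)*x) by positivity)
        nlinarith only [hH]
      have hP0nn : (0:ℝ) ≤ ∑ i ∈ (Finset.Ico 1 (n+1)).filter (fun i => ¬ P i), bw n i x :=
        Finset.sum_nonneg fun i _ => bw_nonneg hx0 hx1
      -- second moment bound on bad set
      have hmom : ∑ i ∈ (Finset.Ico 1 (n+1)).filter (fun i => ¬ P i),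
          bw n i x * (((n:ℝ)*x/(i:ℝ)) ^ q)^2 ≤ 7 := by
        have step1 : ∀ i ∈ Finset.Ico 1 (n+1),
            bw n i x * (((n:ℝ)*x/(i:ℝ)) ^ q)^2
              ≤ bw n i x * (1 + ((n:ℝ)*x/(i:ℝ))^2) := by
          intro i hi
          apply mul_le_mul_of_nonneg_left ?_ (bw_nonneg hx0 hx1)
          rw [h2q _ (by positivity)]
          exact rpow_le_one_add_sq (by positivity) hp1 hp2
        calc ∑ i ∈ (Finset.Ico 1 (n+1)).filter (fun i => ¬ P i),
              bw n i x * (((n:ℝ)*x/(i:ℝ)) ^ q)^2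
            ≤ ∑ i ∈ Finset.Ico 1 (n+1), bw n i x * (((n:ℝ)*x/(i:ℝ)) ^ q)^2 := by
              apply Finset.sum_le_sum_of_subset_of_nonneg (Finset.filter_subset _ _)
              intro j _ _
              have := bw_nonneg (n := n) (i := j) hx0 hx1
              positivity
          _ ≤ ∑ i ∈ Finset.Ico 1 (n+1), bw n i x * (1 + ((n:ℝ)*x/(i:ℝ))^2) :=
              Finset.sum_le_sum step1
          _ = (∑ i ∈ Finset.Ico 1 (n+1), bw n i x)
              + ∑ i ∈ Finset.Ico 1 (n+1), bw n i x * (((n:ℝ)*x/(i:ℝ))^2) := by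
              rw [← Finset.sum_add_distrib]
              apply Finset.sum_congr rfl
              intro i _
              ring
          _ ≤ 1 + 6 := by
              have s1 : ∑ i ∈ Finset.Ico 1 (n+1), bw n i x ≤ 1 := by
                rw [← bw_sum n x]
                apply Finset.sum_le_sum_of_subset_of_nonneg
                · intro j hj
                  rw [Finset.mem_Ico] at hj
                  rw [Finset.mem_range]
                  omega
                · intro j _ _
                  exact bw_nonneg hx0 hx1
              have s2 := bw_E2 n x hx hx1
              linarith only [s1, s2]
          _ = 7 := by norm_num
      -- Cauchy-Schwarz on bad set
      have hS1 : ∑ i ∈ (Finset.Ico 1 (n+1)).filter (fun i => ¬ P i),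
          bw n i x * (((n:ℝ)*x/(i:ℝ)) ^ q) ≤ 3 * Real.sqrt (1/(η^2*K)) := by
        have hz0 : (0:ℝ) ≤ 1/(η^2*K) := by positivity
        have cs := Finset.sum_mul_sq_le_sq_mul_sq
          ((Finset.Ico 1 (n+1)).filter (fun i => ¬ P i))
          (fun i => Real.sqrt (bw n i x) * (((n:ℝ)*x/(i:ℝ)) ^ q))
          (fun i => Real.sqrt (bw n i x))
        have e1 : ∑ i ∈ (Finset.Ico 1 (n+1)).filter (fun i => ¬ P i),
            (Real.sqrt (bw n i x) * (((n:ℝ)*x/(i:ℝ)) ^ q)) * Real.sqrt (bw n i x)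
            = ∑ i ∈ (Finset.Ico 1 (n+1)).filter (fun i => ¬ P i),
              bw n i x * (((n:ℝ)*x/(i:ℝ)) ^ q) := by
          apply Finset.sum_congr rfl
          intro i _
          rw [mul_right_comm, Real.mul_self_sqrt (bw_nonneg hx0 hx1)]
        have e2 : ∑ i ∈ (Finset.Ico 1 (n+1)).filter (fun i => ¬ P i),
            (Real.sqrt (bw n i x) * (((n:ℝ)*x/(i:ℝ)) ^ q))^2
            = ∑ i ∈ (Finset.Ico 1 (n+1)).filter (fun i => ¬ P i),
              bw n i x * (((n:ℝ)*x/(i:ℝ)) ^ q)^2 := by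
          apply Finset.sum_congr rfl
          intro i _
          rw [mul_pow, Real.sq_sqrt (bw_nonneg hx0 hx1)]
        have e3 : ∑ i ∈ (Finset.Ico 1 (n+1)).filter (fun i => ¬ P i),
            (Real.sqrt (bw n i x))^2
            = ∑ i ∈ (Finset.Ico 1 (n+1)).filter (fun i => ¬ P i), bw n i x := by
          apply Finset.sum_congr rfl
          intro i _
          rw [Real.sq_sqrt (bw_nonneg hx0 hx1)]
        rw [e1, e2, e3] at cs
        have hS0 : (0:ℝ) ≤ ∑ i ∈ (Finset.Ico 1 (n+1)).filter (fun i => ¬ P i),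
            bw n i x * (((n:ℝ)*x/(i:ℝ)) ^ q) :=
          Finset.sum_nonneg fun i _ => mul_nonneg (bw_nonneg hx0 hx1) (hu0 i)
        have hsq : (∑ i ∈ (Finset.Ico 1 (n+1)).filter (fun i => ¬ P i),
            bw n i x * (((n:ℝ)*x/(i:ℝ)) ^ q))^2 ≤ 9 * (1/(η^2*K)) := by
          have m0 : (0:ℝ) ≤ ∑ i ∈ (Finset.Ico 1 (n+1)).filter (fun i => ¬ P i),
              bw n i x * (((n:ℝ)*x/(i:ℝ)) ^ q)^2 :=
            Finset.sum_nonneg fun i _ => mul_nonneg (bw_nonneg hx0 hx1) (sq_nonneg _)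
          have hA2 := mul_le_mul_of_nonneg_right hmom hP0nn
          have hB2 := mul_le_mul_of_nonneg_left hP0 (show (0:ℝ) ≤ 7 by norm_num)
          linarith only [cs, hA2, hB2, hz0]
        calc ∑ i ∈ (Finset.Ico 1 (n+1)).filter (fun i => ¬ P i),
              bw n i x * (((n:ℝ)*x/(i:ℝ)) ^ q)
            = Real.sqrt ((∑ i ∈ (Finset.Ico 1 (n+1)).filter (fun i => ¬ P i),
                bw n i x * (((n:ℝ)*x/(i:ℝ)) ^ q))^2) := (Real.sqrt_sq hS0).symm
          _ ≤ Real.sqrt (9 * (1/(η^2*K))) := Real.sqrt_le_sqrt hsq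
          _ = 3 * Real.sqrt (1/(η^2*K)) := by
              rw [show (9:ℝ) = 3^2 by norm_num, Real.sqrt_mul (by positivity),
                Real.sqrt_sq (by norm_num)]
      -- bad set bound
      have hbad : ∑ i ∈ (Finset.Ico 1 (n+1)).filter (fun i => ¬ P i),
          bw n i x * |x ^ p * (n:ℝ) ^ q * r i - Cp * x ^ q| ≤ 2*δ := by
        have hb : ∀ i ∈ (Finset.Ico 1 (n+1)).filter (fun i => ¬ P i),
            bw n i x * |x ^ p * (n:ℝ) ^ q * r i - Cp * x ^ q|
              ≤ M * (bw n i x * (((n:ℝ)*x/(i:ℝ)) ^ q)) + Cp * bw n i x := by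
          intro i hi
          rw [Finset.mem_filter, Finset.mem_Ico] at hi
          obtain ⟨⟨hi1, hi2⟩, _⟩ := hi
          have hip : (0:ℝ) < (i:ℝ) := by exact_mod_cast hi1
          have ha0 : 0 ≤ r i * (i:ℝ)^q :=
            mul_nonneg (hr0 i) (Real.rpow_nonneg hip.le q)
          have hstep : |x ^ p * (n:ℝ) ^ q * r i - Cp * x ^ q|
              ≤ (((n:ℝ)*x/(i:ℝ)) ^ q) * M + Cp := by
            refine (htri i).trans ?_
            have h1 : x ^ p * (n:ℝ) ^ q * r i ≤ (((n:ℝ)*x/(i:ℝ)) ^ q) * M := by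
              rw [hTi i hi1]
              have s1 : x ^ q * (((n:ℝ)*x/(i:ℝ)) ^ q * (r i * (i:ℝ)^q))
                  ≤ 1 * (((n:ℝ)*x/(i:ℝ)) ^ q * (r i * (i:ℝ)^q)) :=
                mul_le_mul_of_nonneg_right hxq1 (mul_nonneg (hu0 i) ha0)
              have s2 : ((n:ℝ)*x/(i:ℝ)) ^ q * (r i * (i:ℝ)^q)
                  ≤ ((n:ℝ)*x/(i:ℝ)) ^ q * M :=
                mul_le_mul_of_nonneg_left (hM i) (hu0 i)
              linarith
            have h2 : Cp * x ^ q ≤ Cp := by nlinarith only [hxq1, hCp.le, hxq0]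
            linarith only [h1, h2]
          calc bw n i x * |x ^ p * (n:ℝ) ^ q * r i - Cp * x ^ q|
              ≤ bw n i x * ((((n:ℝ)*x/(i:ℝ)) ^ q) * M + Cp) :=
                mul_le_mul_of_nonneg_left hstep (bw_nonneg hx0 hx1)
            _ = M * (bw n i x * (((n:ℝ)*x/(i:ℝ)) ^ q)) + Cp * bw n i x := by ring
        calc ∑ i ∈ (Finset.Ico 1 (n+1)).filter (fun i => ¬ P i),
              bw n i x * |x ^ p * (n:ℝ) ^ q * r i - Cp * x ^ q|
            ≤ ∑ i ∈ (Finset.Ico 1 (n+1)).filter (fun i => ¬ P i),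
              (M * (bw n i x * (((n:ℝ)*x/(i:ℝ)) ^ q)) + Cp * bw n i x) :=
              Finset.sum_le_sum hb
          _ = M * (∑ i ∈ (Finset.Ico 1 (n+1)).filter (fun i => ¬ P i),
                bw n i x * (((n:ℝ)*x/(i:ℝ)) ^ q))
              + Cp * (∑ i ∈ (Finset.Ico 1 (n+1)).filter (fun i => ¬ P i), bw n i x) := by
              rw [Finset.sum_add_distrib, ← Finset.mul_sum, ← Finset.mul_sum]
          _ ≤ M * (3 * Real.sqrt (1/(η^2*K))) + Cp * (1/(η^2*K)) := by
              have m1 : M * (∑ i ∈ (Finset.Ico 1 (n+1)).filter (fun i => ¬ P i),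
                  bw n i x * (((n:ℝ)*x/(i:ℝ)) ^ q)) ≤ M * (3 * Real.sqrt (1/(η^2*K))) :=
                mul_le_mul_of_nonneg_left hS1 (by linarith only [hM2])
              have m2 : Cp * (∑ i ∈ (Finset.Ico 1 (n+1)).filter (fun i => ¬ P i), bw n i x)
                  ≤ Cp * (1/(η^2*K)) := mul_le_mul_of_nonneg_left hP0 hCp.le
              linarith only [m1, m2]
          _ ≤ δ + δ := add_le_add hK3 hK4
          _ = 2*δ := by ring
      -- assemble
      have h10 : 10 * (n:ℝ)^(-q) ≤ δ := by
        have hI : 10 * (n:ℝ)^(-q) ≤ (2*K^2 + Cp*K + 10) * (n:ℝ)^(-q) := by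
          apply mul_le_mul_of_nonneg_right ?_ hnqneg.le
          have c1 : (0:ℝ) ≤ Cp*K := mul_nonneg hCp.le (by linarith only [hK1])
          have c2 := sq_nonneg K
          nlinarith only [c1, c2]
        linarith only [hI, hnK]
      calc bw n 0 x * |x ^ p * (n:ℝ) ^ q * r 0 - Cp * x ^ q|
          + ∑ i ∈ Finset.Ico 1 (n+1), bw n i x * |x ^ p * (n:ℝ) ^ q * r i - Cp * x ^ q|
          ≤ (10 * (n:ℝ)^(-q) + δ) + (2*δ + 2*δ) := by
            rw [← hIco]
            exact add_le_add hterm0 (add_le_add hgood hbad)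
        _ ≤ δ + δ + (2*δ + 2*δ) := by linarith only [h10]
        _ = 6*δ := by ring

theorem stmt_4 (p Cp : ℝ) (hp1 : 1 ≤ p) (hp2 : p ≤ 2) (hCp : 0 < Cp)
    (r : ℕ → ℝ) (hr0 : ∀ i, 0 ≤ r i) (hr2 : ∀ i, r i ≤ 2)
    (hrlim : Tendsto (fun i : ℕ => r i * (i : ℝ) ^ (p / 2)) atTop (nhds Cp)) :
    Tendsto
      (fun n : ℕ =>
        ⨆ x : Icc (0:ℝ) 1,
          (n : ℝ) ^ (p / 2) *
            |(∑ i ∈ Finset.range (n + 1),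
                (n.choose i : ℝ) * r i * (x : ℝ) ^ ((i : ℝ) + p) * (1 - (x : ℝ)) ^ (n - i))
              - Cp * ((x : ℝ) / n) ^ (p / 2)|)
      atTop (nhds 0) := by
  haveI : Nonempty (Icc (0:ℝ) 1) := ⟨⟨0, le_refl 0, by norm_num⟩⟩
  have hq2 : (0:ℝ) < p/2 := by linarith
  obtain ⟨C0, hC0⟩ : BddAbove (Set.range fun i : ℕ => r i * (i:ℝ) ^ (p/2)) :=
    hrlim.bddAbove_range
  have hM2 : (2:ℝ) ≤ max C0 2 := le_max_right _ _
  have hM0 : (0:ℝ) < max C0 2 := by linarith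
  have hMle : ∀ i : ℕ, r i * (i:ℝ)^(p/2) ≤ max C0 2 := fun i =>
    le_trans (hC0 (Set.mem_range_self i)) (le_max_left _ _)
  rw [Metric.tendsto_atTop]
  intro ε hε
  have hδ : 0 < ε/8 := by positivity
  have hε'0 : 0 < min Cp (ε/8) := lt_min hCp hδ
  have hη0 : 0 < min (1/2) ((ε/8)/(4*Cp)) := lt_min (by norm_num) (by positivity)
  have hη2 : min (1/2) ((ε/8)/(4*Cp)) ≤ 1/2 := min_le_left _ _
  have hηδ : 4*Cp*(min (1/2) ((ε/8)/(4*Cp))) ≤ ε/8 := by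
    have h1 : min (1/2) ((ε/8)/(4*Cp)) ≤ (ε/8)/(4*Cp) := min_le_right _ _
    have h2 := mul_le_mul_of_nonneg_left h1 (show (0:ℝ) ≤ 4*Cp by positivity)
    have h3 : 4*Cp*((ε/8)/(4*Cp)) = ε/8 := by field_simp
    linarith only [h2, h3]
  obtain ⟨N0, hN0⟩ := Metric.tendsto_atTop.mp hrlim _ hε'0
  have hN : ∀ i : ℕ, N0 ≤ i → |r i * (i:ℝ)^(p/2) - Cp| ≤ min Cp (ε/8) := fun i hi => by
    have := hN0 i hi
    rw [Real.dist_eq] at this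
    exact this.le
  set η := min (1/2) ((ε/8)/(4*Cp)) with hηdef
  set M := max C0 2 with hMdef
  set K := max (max 1 (2*(N0:ℝ))) (max (9*M^2/(η^2*(ε/8)^2)) (Cp/(η^2*(ε/8)))) with hKdef
  have hK1 : 1 ≤ K := le_trans (le_max_left _ _) (le_max_left _ _)
  have hKN : 2*(N0:ℝ) ≤ K := le_trans (le_max_right _ _) (le_max_left _ _)
  have hK0 : (0:ℝ) < K := by linarith only [hK1]
  have hK3 : M * (3 * Real.sqrt (1/(η^2*K))) ≤ ε/8 := by
    have hKge : 9*M^2/(η^2*(ε/8)^2) ≤ K := le_trans (le_max_left _ _) (le_max_right _ _)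
    have h1 : 1/(η^2*K) ≤ (ε/8)^2/(9*M^2) := by
      rw [div_le_div_iff₀ (by positivity) (by positivity)]
      have h2 := mul_le_mul_of_nonneg_left hKge (show (0:ℝ) ≤ η^2*(ε/8)^2 by positivity)
      have h3 : η^2*(ε/8)^2*(9*M^2/(η^2*(ε/8)^2)) = 9*M^2 := by field_simp
      linarith only [h2, h3]
    have h3 : Real.sqrt (1/(η^2*K)) ≤ Real.sqrt ((ε/8)^2/(9*M^2)) := Real.sqrt_le_sqrt h1
    have h4 : Real.sqrt ((ε/8)^2/(9*M^2)) = (ε/8)/(3*M) := by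
      rw [show (ε/8)^2/(9*M^2) = ((ε/8)/(3*M))^2 by field_simp; ring,
        Real.sqrt_sq (by positivity)]
    rw [h4] at h3
    have h5 : 3 * Real.sqrt (1/(η^2*K)) ≤ 3*((ε/8)/(3*M)) := by linarith only [h3]
    have h6 := mul_le_mul_of_nonneg_left h5 (show (0:ℝ) ≤ M by linarith only [hM2])
    have h7 : M * (3*((ε/8)/(3*M))) = ε/8 := by field_simp
    linarith only [h6, h7]
  have hK4 : Cp * (1/(η^2*K)) ≤ ε/8 := by
    have hKge : Cp/(η^2*(ε/8)) ≤ K := le_trans (le_max_right _ _) (le_max_right _ _)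
    rw [mul_one_div, div_le_iff₀ (by positivity)]
    have h2 := mul_le_mul_of_nonneg_left hKge (show (0:ℝ) ≤ η^2*(ε/8) by positivity)
    have h3 : η^2*(ε/8)*(Cp/(η^2*(ε/8))) = Cp := by field_simp
    nlinarith only [h2, h3]
  have hlim : Tendsto (fun n : ℕ => (2*K^2 + Cp*K + 10) * (n:ℝ)^(-(p/2))) atTop (nhds 0) := by
    have h1 : Tendsto (fun y : ℝ => y^(-(p/2))) atTop (nhds 0) := tendsto_rpow_neg_atTop hq2
    have h2 : Tendsto (fun n : ℕ => ((n:ℝ))^(-(p/2))) atTop (nhds 0) :=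
      h1.comp tendsto_natCast_atTop_atTop
    have h3 := h2.const_mul (2*K^2 + Cp*K + 10)
    simpa using h3
  have hev := hlim.eventually (gt_mem_nhds hδ)
  obtain ⟨n₀, hn₀⟩ := Filter.eventually_atTop.mp (hev.and (eventually_ge_atTop 1))
  refine ⟨n₀, fun n hn => ?_⟩
  obtain ⟨h1n, h2n⟩ := hn₀ n hn
  have hpt : ∀ y : Icc (0:ℝ) 1,
      (n : ℝ) ^ (p / 2) *
        |(∑ i ∈ Finset.range (n + 1),
            (n.choose i : ℝ) * r i * (y : ℝ) ^ ((i : ℝ) + p) * (1 - (y : ℝ)) ^ (n - i))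
          - Cp * ((y : ℝ) / n) ^ (p / 2)| ≤ 6 * (ε/8) := fun y =>
    pointwise p Cp (p/2) hp1 hp2 rfl hCp r hr0 hr2 (ε/8) hδ
      (min Cp (ε/8)) η M K N0
      hε'0.le (min_le_left _ _) (min_le_right _ _)
      hη0 hη2 hηδ hM2 hMle hN hK1 hKN hK3 hK4 n h2n h1n.le
      (y : ℝ) y.2.1 y.2.2
  have hbdd : BddAbove (Set.range fun y : Icc (0:ℝ) 1 =>
      (n : ℝ) ^ (p / 2) *
        |(∑ i ∈ Finset.range (n + 1),
            (n.choose i : ℝ) * r i * (y : ℝ) ^ ((i : ℝ) + p) * (1 - (y : ℝ)) ^ (n - i))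
          - Cp * ((y : ℝ) / n) ^ (p / 2)|) := by
    refine ⟨6 * (ε/8), ?_⟩
    rintro z ⟨y, rfl⟩
    exact hpt y
  have hsup_le : (⨆ y : Icc (0:ℝ) 1,
      (n : ℝ) ^ (p / 2) *
        |(∑ i ∈ Finset.range (n + 1),
            (n.choose i : ℝ) * r i * (y : ℝ) ^ ((i : ℝ) + p) * (1 - (y : ℝ)) ^ (n - i))
          - Cp * ((y : ℝ) / n) ^ (p / 2)|) ≤ 6 * (ε/8) := ciSup_le hpt
  have h0le : (0:ℝ) ≤ ⨆ y : Icc (0:ℝ) 1,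
      (n : ℝ) ^ (p / 2) *
        |(∑ i ∈ Finset.range (n + 1),
            (n.choose i : ℝ) * r i * (y : ℝ) ^ ((i : ℝ) + p) * (1 - (y : ℝ)) ^ (n - i))
          - Cp * ((y : ℝ) / n) ^ (p / 2)| := by
    refine le_ciSup_of_le hbdd ⟨0, le_refl 0, by norm_num⟩ ?_
    positivity
  rw [Real.dist_eq, sub_zero, abs_of_nonneg h0le]
  calc (⨆ y : Icc (0:ℝ) 1,
      (n : ℝ) ^ (p / 2) *
        |(∑ i ∈ Finset.range (n + 1),
            (n.choose i : ℝ) * r i * (y : ℝ) ^ ((i : ℝ) + p) * (1 - (y : ℝ)) ^ (n - i))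
          - Cp * ((y : ℝ) / n) ^ (p / 2)|) ≤ 6 * (ε/8) := hsup_le
    _ < ε := by linarith only [hε]
end

section
/- Fix 1 ≤ p ≤ 2 and C_p > 0, and let r_i = C_p/(i^{p/2} + 1). Define H_n(x) = Σ_{i=0}^n C(n,i) r_i x^{i+p} (1−x)^{n−i} and G_n(x) = Σ_{i=0}^n C(n,i) r_i x^{i} (i/n)^p (1−x)^{n−i}. Then there exist constants c > 0 and K > 0 such that for all sufficiently large n and all x with c·(log n)²/n ≤ x ≤ 1, |H_n(x) − G_n(x)| ≤ K · H_n(x) / √(log n). -/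
open Filter Set Real

section auxstmt5

lemma aux_rpow_diff_le {u v p : ℝ} (hv : 0 ≤ v) (huv : v ≤ u) (hp : 1 ≤ p) :
    u ^ p - v ^ p ≤ p * u ^ (p - 1) * (u - v) := by
  rcases eq_or_lt_of_le (hv.trans huv) with h | hu
  · have hv0 : v = 0 := le_antisymm (huv.trans h.symm.le) hv
    simp [← h, hv0, Real.zero_rpow (by linarith : p ≠ 0)]
  · have hs : (-1 : ℝ) ≤ v / u - 1 := by
      have : 0 ≤ v / u := div_nonneg hv hu.le
      linarith
    have key := one_add_mul_self_le_rpow_one_add hs hp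
    have h1 : (1 : ℝ) + (v / u - 1) = v / u := by ring
    rw [h1] at key
    have h2 : (v / u) ^ p = v ^ p / u ^ p := Real.div_rpow hv hu.le p
    rw [h2] at key
    have hup : 0 < u ^ p := Real.rpow_pos_of_pos hu p
    have h3 : u ^ p * (1 + p * (v / u - 1)) ≤ v ^ p := by
      calc u ^ p * (1 + p * (v / u - 1)) ≤ u ^ p * (v ^ p / u ^ p) := by
            apply mul_le_mul_of_nonneg_left key hup.le
        _ = v ^ p := by field_simp
    have h4 : u ^ (p - 1) * u = u ^ p := by
      rw [← Real.rpow_add_one hu.ne' (p - 1)]; ring_nf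
    have h5 : u ^ p * (v / u - 1) = u ^ (p - 1) * (v - u) := by
      rw [← h4]; field_simp
    nlinarith [h3, h5]

lemma aux_exp_quad {t : ℝ} (h0 : 0 ≤ t) (h1 : t ≤ 1) : Real.exp t ≤ 1 + t + t ^ 2 := by
  have := Real.abs_exp_sub_one_sub_id_le (x := t) (by rw [abs_of_nonneg h0]; exact h1)
  have := abs_le.1 this
  linarith [this.2]

lemma aux_exp_quad' {t : ℝ} (h0 : 0 ≤ t) (h1 : t ≤ 1) : Real.exp (-t) ≤ 1 - t + t ^ 2 := by
  have := Real.abs_exp_sub_one_sub_id_le (x := -t) (by rw [abs_neg, abs_of_nonneg h0]; exact h1)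
  have h2 := (abs_le.1 this).2
  have : (-t) ^ 2 = t ^ 2 := by ring
  linarith [h2, this.le, this.ge]

lemma aux_mgf' (n : ℕ) (x t : ℝ) :
    ∑ i ∈ Finset.range (n + 1),
      (n.choose i : ℝ) * x ^ i * (1 - x) ^ (n - i) * Real.exp (t * i)
      = (x * Real.exp t + (1 - x)) ^ n := by
  rw [add_pow]
  apply Finset.sum_congr rfl
  intro i _
  have h : Real.exp (t * i) = Real.exp t ^ i := by
    rw [mul_comm]; exact Real.exp_nat_mul t i
  rw [h, mul_pow]
  ring

lemma aux_sum_one (n : ℕ) (x : ℝ) :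
    ∑ i ∈ Finset.range (n + 1),
      (n.choose i : ℝ) * x ^ i * (1 - x) ^ (n - i) = 1 := by
  have h := aux_mgf' n x 0
  simpa using h

lemma aux_tail_core (n : ℕ) {x u a : ℝ} (hx0 : 0 ≤ x) (hx1 : x ≤ 1)
    (P : ℕ → Prop) [DecidablePred P] (hP : ∀ i, P i → a ≤ u * i) :
    ∑ i ∈ (Finset.range (n + 1)).filter (fun i => P i),
      (n.choose i : ℝ) * x ^ i * (1 - x) ^ (n - i)
      ≤ Real.exp (-a + n * x * (Real.exp u - 1)) := by
  have hb : ∀ i : ℕ, 0 ≤ (n.choose i : ℝ) * x ^ i * (1 - x) ^ (n - i) := fun i =>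
    mul_nonneg (mul_nonneg (Nat.cast_nonneg _) (pow_nonneg hx0 _))
      (pow_nonneg (by linarith) _)
  calc ∑ i ∈ (Finset.range (n + 1)).filter (fun i => P i),
        (n.choose i : ℝ) * x ^ i * (1 - x) ^ (n - i)
      ≤ ∑ i ∈ (Finset.range (n + 1)).filter (fun i => P i),
        (n.choose i : ℝ) * x ^ i * (1 - x) ^ (n - i) * Real.exp (u * i - a) := by
        apply Finset.sum_le_sum
        intro i hi
        have hPi : P i := (Finset.mem_filter.1 hi).2
        have h1 : (1 : ℝ) ≤ Real.exp (u * i - a) :=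
          Real.one_le_exp (by linarith [hP i hPi])
        exact le_mul_of_one_le_right (hb i) h1
    _ ≤ ∑ i ∈ Finset.range (n + 1),
        (n.choose i : ℝ) * x ^ i * (1 - x) ^ (n - i) * Real.exp (u * i - a) := by
        apply Finset.sum_le_sum_of_subset_of_nonneg (Finset.filter_subset _ _)
        intro i _ _
        exact mul_nonneg (hb i) (Real.exp_pos _).le
    _ = Real.exp (-a) * ∑ i ∈ Finset.range (n + 1),
        (n.choose i : ℝ) * x ^ i * (1 - x) ^ (n - i) * Real.exp (u * i) := by
        rw [Finset.mul_sum]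
        apply Finset.sum_congr rfl
        intro i _
        rw [show u * i - a = -a + u * i by ring, Real.exp_add]
        ring
    _ = Real.exp (-a) * (x * Real.exp u + (1 - x)) ^ n := by rw [aux_mgf']
    _ ≤ Real.exp (-a) * Real.exp (x * (Real.exp u - 1)) ^ n := by
        apply mul_le_mul_of_nonneg_left _ (Real.exp_pos _).le
        apply pow_le_pow_left₀
        · exact add_nonneg (mul_nonneg hx0 (Real.exp_pos _).le) (by linarith)
        · have := Real.add_one_le_exp (x * (Real.exp u - 1))
          linarith
    _ = Real.exp (-a + n * x * (Real.exp u - 1)) := by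
        rw [← Real.exp_nat_mul, ← Real.exp_add]
        ring_nf

lemma aux_tail_high (n : ℕ) {x t s : ℝ} (hx0 : 0 ≤ x) (hx1 : x ≤ 1)
    (ht0 : 0 ≤ t) (ht1 : t ≤ 1) :
    ∑ i ∈ (Finset.range (n + 1)).filter (fun i : ℕ => (n : ℝ) * x + s ≤ (i : ℝ)),
      (n.choose i : ℝ) * x ^ i * (1 - x) ^ (n - i)
      ≤ Real.exp (-(t * s) + n * x * t ^ 2) := by
  have h := aux_tail_core n (u := t) (a := t * ((n : ℝ) * x + s)) hx0 hx1
    (fun i : ℕ => (n : ℝ) * x + s ≤ (i : ℝ))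
    (fun i hi => mul_le_mul_of_nonneg_left hi ht0)
  refine h.trans (Real.exp_le_exp.2 ?_)
  have hq := aux_exp_quad ht0 ht1
  have hnx : 0 ≤ (n : ℝ) * x := mul_nonneg (Nat.cast_nonneg _) hx0
  nlinarith [mul_le_mul_of_nonneg_left (by linarith : Real.exp t - 1 - t ≤ t ^ 2) hnx]

lemma aux_tail_low (n : ℕ) {x t s : ℝ} (hx0 : 0 ≤ x) (hx1 : x ≤ 1)
    (ht0 : 0 ≤ t) (ht1 : t ≤ 1) :
    ∑ i ∈ (Finset.range (n + 1)).filter (fun i : ℕ => (i : ℝ) ≤ (n : ℝ) * x - s),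
      (n.choose i : ℝ) * x ^ i * (1 - x) ^ (n - i)
      ≤ Real.exp (-(t * s) + n * x * t ^ 2) := by
  have h := aux_tail_core n (u := -t) (a := -(t * ((n : ℝ) * x - s))) hx0 hx1
    (fun i : ℕ => (i : ℝ) ≤ (n : ℝ) * x - s)
    (fun i hi => by
      have := mul_le_mul_of_nonneg_left hi ht0
      nlinarith)
  refine h.trans (Real.exp_le_exp.2 ?_)
  have hq := aux_exp_quad' ht0 ht1
  have hnx : 0 ≤ (n : ℝ) * x := mul_nonneg (Nat.cast_nonneg _) hx0
  nlinarith [mul_le_mul_of_nonneg_left (by linarith : Real.exp (-t) - 1 + t ≤ t ^ 2) hnx]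

lemma aux_near {x y p sq : ℝ} (hx : 0 < x) (hy : 0 ≤ y) (hp1 : 1 ≤ p) (hp2 : p ≤ 2)
    (hsq : 2 ≤ sq) (hclose : |y - x| ≤ x / sq) :
    |x ^ p - y ^ p| ≤ 3 / sq * x ^ p := by
  have hsq0 : 0 < sq := by linarith
  have hxp : 0 < x ^ p := Real.rpow_pos_of_pos hx p
  have hxp1 : 0 < x ^ (p - 1) := Real.rpow_pos_of_pos hx (p - 1)
  have hxx : x ^ (p - 1) * x = x ^ p := by
    rw [← Real.rpow_add_one hx.ne' (p - 1)]
    norm_num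
  have hd : x / sq ≤ x / 2 := div_le_div_of_nonneg_left hx.le (by norm_num) hsq
  have hxsq : 0 < x / sq := div_pos hx hsq0
  have hcl := abs_le.1 hclose
  have h23 : (2:ℝ) / sq * x ^ p ≤ 3 / sq * x ^ p := by gcongr; norm_num
  rcases le_total y x with hyx | hxy
  · have h1 : x ^ p - y ^ p ≤ p * x ^ (p - 1) * (x - y) := aux_rpow_diff_le hy hyx hp1
    have h2 : |x ^ p - y ^ p| = x ^ p - y ^ p := by
      rw [abs_of_nonneg]
      have := Real.rpow_le_rpow hy hyx (by linarith : (0:ℝ) ≤ p)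
      linarith
    have h4 : p * x ^ (p - 1) * (x - y) ≤ 2 * x ^ (p - 1) * (x / sq) := by
      have hxy0 : 0 ≤ x - y := by linarith
      have h3 : x - y ≤ x / sq := by linarith [hcl.1]
      have hs1 : p * x ^ (p - 1) ≤ 2 * x ^ (p - 1) := by nlinarith [hxp1.le]
      calc p * x ^ (p - 1) * (x - y) ≤ 2 * x ^ (p - 1) * (x - y) :=
            mul_le_mul_of_nonneg_right hs1 hxy0
        _ ≤ 2 * x ^ (p - 1) * (x / sq) := by
            apply mul_le_mul_of_nonneg_left h3 (by positivity)
    have h5 : 2 * x ^ (p - 1) * (x / sq) = 2 / sq * x ^ p := by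
      rw [← hxx]; field_simp
    rw [h2]; linarith
  · have hy32 : y ≤ 3 / 2 * x := by
      have := hcl.2
      linarith
    have h1 : y ^ p - x ^ p ≤ p * y ^ (p - 1) * (y - x) := aux_rpow_diff_le hx.le hxy hp1
    have h2 : |x ^ p - y ^ p| = y ^ p - x ^ p := by
      rw [abs_sub_comm, abs_of_nonneg]
      have := Real.rpow_le_rpow hx.le hxy (by linarith : (0:ℝ) ≤ p)
      linarith
    have hyp1 : y ^ (p - 1) ≤ 3 / 2 * x ^ (p - 1) := by
      calc y ^ (p - 1) ≤ (3 / 2 * x) ^ (p - 1) :=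
            Real.rpow_le_rpow hy hy32 (by linarith)
        _ = (3 / 2 : ℝ) ^ (p - 1) * x ^ (p - 1) :=
            Real.mul_rpow (by norm_num) hx.le
        _ ≤ 3 / 2 * x ^ (p - 1) := by
            apply mul_le_mul_of_nonneg_right _ hxp1.le
            calc (3 / 2 : ℝ) ^ (p - 1) ≤ (3 / 2 : ℝ) ^ (1 : ℝ) :=
                  Real.rpow_le_rpow_of_exponent_le (by norm_num) (by linarith)
              _ = 3 / 2 := Real.rpow_one _
    have hyp1' : 0 ≤ y ^ (p - 1) := Real.rpow_nonneg hy _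
    have h4 : p * y ^ (p - 1) * (y - x) ≤ 2 * (3 / 2 * x ^ (p - 1)) * (x / sq) := by
      have hxy0 : 0 ≤ y - x := by linarith
      have h3 : y - x ≤ x / sq := by linarith [hcl.2]
      have hs1 : p * y ^ (p - 1) ≤ 2 * (3 / 2 * x ^ (p - 1)) := by nlinarith
      calc p * y ^ (p - 1) * (y - x) ≤ 2 * (3 / 2 * x ^ (p - 1)) * (y - x) :=
            mul_le_mul_of_nonneg_right hs1 hxy0
        _ ≤ 2 * (3 / 2 * x ^ (p - 1)) * (x / sq) := by
            apply mul_le_mul_of_nonneg_left h3 (by positivity)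
    have h5 : 2 * (3 / 2 * x ^ (p - 1)) * (x / sq) = 3 / sq * x ^ p := by
      rw [← hxx]; field_simp
    rw [h2]; linarith

end auxstmt5

set_option maxHeartbeats 1000000 in
theorem stmt_5 (p Cp : ℝ) (hp1 : 1 ≤ p) (hp2 : p ≤ 2) (hCp : 0 < Cp)
    (r : ℕ → ℝ) (hr : ∀ i, r i = Cp / ((i : ℝ) ^ (p / 2) + 1))
    (H G : ℕ → ℝ → ℝ)
    (hH : ∀ n x, H n x = ∑ i ∈ Finset.range (n + 1),
        (n.choose i : ℝ) * r i * x ^ ((i : ℝ) + p) * (1 - x) ^ (n - i))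
    (hG : ∀ n x, G n x = ∑ i ∈ Finset.range (n + 1),
        (n.choose i : ℝ) * r i * x ^ (i : ℕ) * ((i : ℝ) / n) ^ p * (1 - x) ^ (n - i)) :
    ∃ c > (0:ℝ), ∃ K > (0:ℝ), ∃ N : ℕ, ∀ n ≥ N, ∀ x : ℝ,
      c * (Real.log n) ^ 2 / n ≤ x → x ≤ 1 →
      |H n x - G n x| ≤ K * H n x / Real.sqrt (Real.log n) := by
  refine ⟨20, by norm_num, 4, by norm_num, 60, ?_⟩
  intro n hn x hx1 hx2
  -- basic numeric facts
  have hn60 : (60:ℝ) ≤ (n:ℝ) := by exact_mod_cast hn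
  have hn0 : (0:ℝ) < n := by linarith
  have hn1 : (1:ℝ) ≤ n := by linarith
  have hL4 : (4:ℝ) ≤ Real.log n := by
    rw [Real.le_log_iff_exp_le hn0]
    have h1 : Real.exp 1 ≤ 2.7182818286 := Real.exp_one_lt_d9.le
    have h2 : Real.exp 4 = Real.exp 1 ^ (4:ℕ) := by
      rw [← Real.exp_nat_mul]; norm_num
    rw [h2]
    calc Real.exp 1 ^ (4:ℕ) ≤ 2.7182818286 ^ (4:ℕ) :=
          pow_le_pow_left₀ (Real.exp_pos 1).le h1 4
      _ ≤ 60 := by norm_num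
      _ ≤ n := hn60
  set L := Real.log n with hLdef
  have hL0 : (0:ℝ) < L := by linarith
  set sq := Real.sqrt L with hsqdef
  have hsq2 : sq ^ 2 = L := Real.sq_sqrt hL0.le
  have hsq : 2 ≤ sq := by
    have h4 : Real.sqrt 4 ≤ sq := Real.sqrt_le_sqrt hL4
    have : Real.sqrt 4 = 2 := by
      rw [show (4:ℝ) = 2 ^ 2 by norm_num, Real.sqrt_sq (by norm_num : (0:ℝ) ≤ 2)]
    linarith
  have hsq0 : (0:ℝ) < sq := by linarith
  have hsqL : sq ≤ L := by nlinarith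
  have hx0 : 0 < x := lt_of_lt_of_le (by positivity) hx1
  have hnx : 20 * L ^ 2 ≤ (n:ℝ) * x := by
    rw [div_le_iff₀ hn0] at hx1
    linarith
  have hxp : 0 < x ^ p := Real.rpow_pos_of_pos hx0 p
  -- notation
  set b : ℕ → ℝ := fun i => (n.choose i : ℝ) * x ^ i * (1 - x) ^ (n - i) with hbdef
  have hb : ∀ i, 0 ≤ b i := fun i =>
    mul_nonneg (mul_nonneg (Nat.cast_nonneg _) (pow_nonneg hx0.le _))
      (pow_nonneg (by linarith) _)
  have hr_pos : ∀ i, 0 < r i := by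
    intro i
    rw [hr]
    have : (0:ℝ) ≤ (i:ℝ) ^ (p / 2) := Real.rpow_nonneg (Nat.cast_nonneg _) _
    positivity
  have hr_le : ∀ i, r i ≤ Cp := by
    intro i
    rw [hr]
    have h0 : (0:ℝ) ≤ (i:ℝ) ^ (p / 2) := Real.rpow_nonneg (Nat.cast_nonneg _) _
    calc Cp / ((i:ℝ) ^ (p / 2) + 1) ≤ Cp / 1 := by gcongr <;> linarith
      _ = Cp := div_one Cp
  have hr_ge : ∀ i ∈ Finset.range (n + 1), Cp / ((n:ℝ) + 1) ≤ r i := by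
    intro i hi
    have hin : (i:ℝ) ≤ n := by
      exact_mod_cast Nat.lt_succ_iff.1 (Finset.mem_range.1 hi)
    have hle : (i:ℝ) ^ (p / 2) ≤ (n:ℝ) := by
      rcases Nat.eq_zero_or_pos i with h0 | h0
      · subst h0
        rw [Nat.cast_zero, Real.zero_rpow (by positivity : p / 2 ≠ 0)]
        linarith
      · have h1 : (1:ℝ) ≤ (i:ℝ) := by exact_mod_cast h0
        calc (i:ℝ) ^ (p / 2) ≤ (i:ℝ) ^ (1:ℝ) :=
              Real.rpow_le_rpow_of_exponent_le h1 (by linarith)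
          _ = (i:ℝ) := Real.rpow_one _
          _ ≤ n := hin
    rw [hr]
    have h0 : (0:ℝ) ≤ (i:ℝ) ^ (p / 2) := Real.rpow_nonneg (Nat.cast_nonneg _) _
    gcongr <;> linarith
  set M : ℝ := ∑ i ∈ Finset.range (n + 1), b i * r i with hMdef
  -- rewrite of H
  have hrpow : ∀ i : ℕ, x ^ ((i:ℝ) + p) = x ^ i * x ^ p := by
    intro i
    rw [Real.rpow_add hx0, Real.rpow_natCast]
  have hHM : H n x = x ^ p * M := by
    rw [hH, hMdef, Finset.mul_sum]
    apply Finset.sum_congr rfl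
    intro i _
    rw [hrpow i, hbdef]
    ring
  -- the difference as a single sum
  set Pn : ℕ → Prop := fun i => |(i:ℝ) / n - x| ≤ x / sq with hPndef
  have habs : |H n x - G n x| ≤
      ∑ i ∈ Finset.range (n + 1), b i * r i * |x ^ p - ((i:ℝ) / n) ^ p| := by
    calc |H n x - G n x|
        = |∑ i ∈ Finset.range (n + 1), b i * r i * (x ^ p - ((i:ℝ) / n) ^ p)| := by
          rw [hH, hG, ← Finset.sum_sub_distrib]
          congr 1
          apply Finset.sum_congr rfl
          intro i _
          rw [hrpow i, hbdef]
          ring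
      _ ≤ ∑ i ∈ Finset.range (n + 1), |b i * r i * (x ^ p - ((i:ℝ) / n) ^ p)| :=
          Finset.abs_sum_le_sum_abs _ _
      _ = ∑ i ∈ Finset.range (n + 1), b i * r i * |x ^ p - ((i:ℝ) / n) ^ p| := by
          apply Finset.sum_congr rfl
          intro i _
          rw [abs_mul, abs_of_nonneg (mul_nonneg (hb i) (hr_pos i).le)]
  -- split near / far
  have hsplit :
      ∑ i ∈ Finset.range (n + 1), b i * r i * |x ^ p - ((i:ℝ) / n) ^ p|
      = (∑ i ∈ (Finset.range (n + 1)).filter Pn, b i * r i * |x ^ p - ((i:ℝ) / n) ^ p|)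
      + ∑ i ∈ (Finset.range (n + 1)).filter (fun i => ¬ Pn i),
          b i * r i * |x ^ p - ((i:ℝ) / n) ^ p| :=
    (Finset.sum_filter_add_sum_filter_not _ _ _).symm
  -- near part
  have hnear : ∑ i ∈ (Finset.range (n + 1)).filter Pn,
      b i * r i * |x ^ p - ((i:ℝ) / n) ^ p| ≤ 3 / sq * x ^ p * M := by
    calc ∑ i ∈ (Finset.range (n + 1)).filter Pn,
          b i * r i * |x ^ p - ((i:ℝ) / n) ^ p|
        ≤ ∑ i ∈ (Finset.range (n + 1)).filter Pn,
          3 / sq * x ^ p * (b i * r i) := by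
          apply Finset.sum_le_sum
          intro i hi
          have hPi : Pn i := (Finset.mem_filter.1 hi).2
          have hy : (0:ℝ) ≤ (i:ℝ) / n := by positivity
          have hcl : |(i:ℝ) / n - x| ≤ x / sq := hPi
          have := aux_near hx0 hy hp1 hp2 hsq hcl
          have hbr : 0 ≤ b i * r i := mul_nonneg (hb i) (hr_pos i).le
          calc b i * r i * |x ^ p - ((i:ℝ) / n) ^ p|
              ≤ b i * r i * (3 / sq * x ^ p) := mul_le_mul_of_nonneg_left this hbr
            _ = 3 / sq * x ^ p * (b i * r i) := by ring
      _ = 3 / sq * x ^ p * ∑ i ∈ (Finset.range (n + 1)).filter Pn, b i * r i := by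
          rw [Finset.mul_sum]
      _ ≤ 3 / sq * x ^ p * M := by
          apply mul_le_mul_of_nonneg_left _ (by positivity)
          apply Finset.sum_le_sum_of_subset_of_nonneg (Finset.filter_subset _ _)
          intro i _ _
          exact mul_nonneg (hb i) (hr_pos i).le
  -- far part
  set T : ℝ := ∑ i ∈ (Finset.range (n + 1)).filter (fun i => ¬ Pn i), b i with hTdef
  have hfar : ∑ i ∈ (Finset.range (n + 1)).filter (fun i => ¬ Pn i),
      b i * r i * |x ^ p - ((i:ℝ) / n) ^ p| ≤ 2 * Cp * T := by
    rw [hTdef, Finset.mul_sum]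
    apply Finset.sum_le_sum
    intro i hi
    have hin : i ∈ Finset.range (n + 1) := Finset.mem_filter.1 hi |>.1
    have hiN : (i:ℝ) / n ≤ 1 := by
      rw [div_le_one hn0]
      exact_mod_cast Nat.lt_succ_iff.1 (Finset.mem_range.1 hin)
    have hy : (0:ℝ) ≤ (i:ℝ) / n := by positivity
    have habs2 : |x ^ p - ((i:ℝ) / n) ^ p| ≤ 2 := by
      have h1 : x ^ p ≤ 1 := Real.rpow_le_one hx0.le hx2 (by linarith)
      have h2 : ((i:ℝ) / n) ^ p ≤ 1 := Real.rpow_le_one hy hiN (by linarith)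
      have h3 : (0:ℝ) ≤ ((i:ℝ) / n) ^ p := Real.rpow_nonneg hy _
      rw [abs_le]
      constructor <;> nlinarith
    calc b i * r i * |x ^ p - ((i:ℝ) / n) ^ p| ≤ b i * Cp * 2 := by
          apply mul_le_mul (mul_le_mul_of_nonneg_left (hr_le i) (hb i)) habs2
            (abs_nonneg _) (mul_nonneg (hb i) hCp.le)
      _ = 2 * Cp * b i := by ring
  -- tail bound on T
  have hT : T ≤ 2 * Real.exp (-((n:ℝ) * x / (4 * L))) := by
    have ht0 : (0:ℝ) ≤ 1 / (2 * sq) := by positivity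
    have ht1 : 1 / (2 * sq) ≤ 1 := by
      rw [div_le_one (by positivity)]
      linarith
    have hhigh := aux_tail_high n (x := x) (t := 1 / (2 * sq)) (s := (n:ℝ) * x / sq)
      hx0.le hx2 ht0 ht1
    have hlow := aux_tail_low n (x := x) (t := 1 / (2 * sq)) (s := (n:ℝ) * x / sq)
      hx0.le hx2 ht0 ht1
    have hexp_eq : -(1 / (2 * sq) * ((n:ℝ) * x / sq)) + (n:ℝ) * x * (1 / (2 * sq)) ^ 2
        = -((n:ℝ) * x / (4 * L)) := by
      rw [← hsq2]
      field_simp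
      ring
    rw [hexp_eq] at hhigh hlow
    -- far set is inside union of tails
    set highF := (Finset.range (n + 1)).filter
      (fun i : ℕ => (n:ℝ) * x + (n:ℝ) * x / sq ≤ (i:ℝ)) with hhighF
    set lowF := (Finset.range (n + 1)).filter
      (fun i : ℕ => (i:ℝ) ≤ (n:ℝ) * x - (n:ℝ) * x / sq) with hlowF
    have hsub : (Finset.range (n + 1)).filter (fun i => ¬ Pn i) ⊆ highF ∪ lowF := by
      intro i hi
      obtain ⟨hin, hnotP⟩ := Finset.mem_filter.1 hi
      have hgt : x / sq < |(i:ℝ) / n - x| := lt_of_not_ge hnotP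
      rcases le_or_gt ((i:ℝ) / n) x with hle | hlt
      · have habs3 : |(i:ℝ) / n - x| = x - (i:ℝ) / n := by
          rw [abs_of_nonpos (by linarith)]; ring
        rw [habs3] at hgt
        have : (i:ℝ) ≤ (n:ℝ) * x - (n:ℝ) * x / sq := by
          have h1 : (i:ℝ) / n < x - x / sq := by linarith
          have h2 := (div_lt_iff₀ hn0).1 h1
          have h3 : ((x - x / sq) * n) = (n:ℝ) * x - (n:ℝ) * x / sq := by
            field_simp
          linarith [h2, h3.le, h3.ge]
        exact Finset.mem_union.2 (Or.inr (Finset.mem_filter.2 ⟨hin, this⟩))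
      · have habs3 : |(i:ℝ) / n - x| = (i:ℝ) / n - x := by
          rw [abs_of_pos (by linarith)]
        rw [habs3] at hgt
        have : (n:ℝ) * x + (n:ℝ) * x / sq ≤ (i:ℝ) := by
          have h1 : x + x / sq < (i:ℝ) / n := by linarith
          have h2 := (lt_div_iff₀ hn0).1 h1
          have h3 : ((x + x / sq) * n) = (n:ℝ) * x + (n:ℝ) * x / sq := by
            field_simp
          linarith [h2, h3.le, h3.ge]
        exact Finset.mem_union.2 (Or.inl (Finset.mem_filter.2 ⟨hin, this⟩))
    calc T ≤ ∑ i ∈ highF ∪ lowF, b i :=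
          Finset.sum_le_sum_of_subset_of_nonneg hsub (fun i _ _ => hb i)
      _ ≤ (∑ i ∈ highF, b i) + ∑ i ∈ lowF, b i := by
          have h := Finset.sum_union_inter (s₁ := highF) (s₂ := lowF) (f := b)
          have h2 : 0 ≤ ∑ i ∈ highF ∩ lowF, b i :=
            Finset.sum_nonneg (fun i _ => hb i)
          linarith
      _ ≤ 2 * Real.exp (-((n:ℝ) * x / (4 * L))) := by
          have := add_le_add hhigh hlow
          linarith
  have hT5 : T ≤ 2 / (n:ℝ) ^ 5 := by
    have h1 : Real.exp (-((n:ℝ) * x / (4 * L))) ≤ Real.exp (-(5 * L)) := by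
      apply Real.exp_le_exp.2
      have : 5 * L ≤ (n:ℝ) * x / (4 * L) := by
        rw [le_div_iff₀ (by positivity)]
        nlinarith
      linarith
    have h2 : Real.exp (-(5 * L)) = 1 / (n:ℝ) ^ 5 := by
      rw [Real.exp_neg]
      rw [show (5:ℝ) * L = ((5:ℕ):ℝ) * L by norm_num, Real.exp_nat_mul,
        Real.exp_log hn0]
      rw [inv_eq_one_div]
    rw [h2] at h1
    calc T ≤ 2 * Real.exp (-((n:ℝ) * x / (4 * L))) := hT
      _ ≤ 2 * (1 / (n:ℝ) ^ 5) := by linarith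
      _ = 2 / (n:ℝ) ^ 5 := by ring
  have hn5 : (4:ℝ) ≤ (n:ℝ) ^ 5 := by
    calc (4:ℝ) ≤ (n:ℝ) := by linarith
      _ ≤ (n:ℝ) ^ 5 := le_self_pow₀ hn1 (by norm_num)
  have hThalf : T ≤ 1 / 2 := by
    calc T ≤ 2 / (n:ℝ) ^ 5 := hT5
      _ ≤ 2 / 4 := by gcongr <;> linarith
      _ ≤ 1 / 2 := by norm_num
  -- lower bound on M
  have hsum1 : ∑ i ∈ Finset.range (n + 1), b i = 1 := aux_sum_one n x
  have hnearb : (1:ℝ) / 2 ≤ ∑ i ∈ (Finset.range (n + 1)).filter Pn, b i := by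
    have h := Finset.sum_filter_add_sum_filter_not (Finset.range (n + 1)) Pn b
    rw [hsum1] at h
    rw [hTdef] at hThalf
    linarith
  have hM_lb : Cp / (2 * ((n:ℝ) + 1)) ≤ M := by
    have hn1' : ((n:ℝ) + 1) ≠ 0 := by positivity
    calc Cp / (2 * ((n:ℝ) + 1)) = Cp / ((n:ℝ) + 1) * (1 / 2) := by
          rw [mul_one_div, div_div, mul_comm]
      _ ≤ Cp / ((n:ℝ) + 1) * ∑ i ∈ (Finset.range (n + 1)).filter Pn, b i := by
          apply mul_le_mul_of_nonneg_left hnearb (by positivity)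
      _ = ∑ i ∈ (Finset.range (n + 1)).filter Pn, Cp / ((n:ℝ) + 1) * b i := by
          rw [Finset.mul_sum]
      _ ≤ ∑ i ∈ (Finset.range (n + 1)).filter Pn, b i * r i := by
          apply Finset.sum_le_sum
          intro i hi
          have hin : i ∈ Finset.range (n + 1) := (Finset.mem_filter.1 hi).1
          calc Cp / ((n:ℝ) + 1) * b i ≤ r i * b i :=
                mul_le_mul_of_nonneg_right (hr_ge i hin) (hb i)
            _ = b i * r i := by ring
      _ ≤ M := by
          apply Finset.sum_le_sum_of_subset_of_nonneg (Finset.filter_subset _ _)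
          intro i _ _
          exact mul_nonneg (hb i) (hr_pos i).le
  -- key comparison for the far part
  have hM0 : 0 < M := lt_of_lt_of_le (by positivity) hM_lb
  have hkey : 4 / (n:ℝ) ^ 5 ≤ x ^ p / (2 * ((n:ℝ) + 1) * sq) := by
    have e1 : 400 * L ^ 4 / (n:ℝ) ^ 2 ≤ x ^ p := by
      have h1 : (20 * L ^ 2 / n) ^ 2 ≤ x ^ 2 := by
        apply pow_le_pow_left₀ (by positivity) hx1
      have h2 : (20 * L ^ 2 / (n:ℝ)) ^ 2 = 400 * L ^ 4 / (n:ℝ) ^ 2 := by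
        field_simp; ring
      have h3 : x ^ (2:ℕ) = x ^ ((2:ℕ):ℝ) := (Real.rpow_natCast x 2).symm
      have h4 : x ^ ((2:ℕ):ℝ) ≤ x ^ p := by
        apply Real.rpow_le_rpow_of_exponent_ge hx0 hx2
        norm_num
        exact hp2
      calc 400 * L ^ 4 / (n:ℝ) ^ 2 ≤ x ^ 2 := by rw [← h2]; exact h1
        _ = x ^ ((2:ℕ):ℝ) := h3
        _ ≤ x ^ p := h4
    have k1 : (4:ℝ) / (n:ℝ) ^ 5 ≤ 4 / (n:ℝ) ^ 3 :=
      div_le_div_of_nonneg_left (by norm_num) (by positivity)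
        (pow_le_pow_right₀ hn1 (by norm_num))
    have k2 : (4:ℝ) / (n:ℝ) ^ 3 ≤ 200 * L ^ 3 / ((n:ℝ) ^ 2 * ((n:ℝ) + 1)) := by
      rw [div_le_div_iff₀ (by positivity) (by positivity)]
      have hL3 : (64:ℝ) ≤ L ^ 3 := by nlinarith
      nlinarith [pow_pos hn0 3, mul_le_mul_of_nonneg_right hL3 (pow_pos hn0 3).le]
    have k3 : 200 * L ^ 3 / ((n:ℝ) ^ 2 * ((n:ℝ) + 1))
        = (400 * L ^ 4 / (n:ℝ) ^ 2) / (2 * ((n:ℝ) + 1) * L) := by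
      field_simp
      ring
    have k4 : (400 * L ^ 4 / (n:ℝ) ^ 2) / (2 * ((n:ℝ) + 1) * L)
        ≤ x ^ p / (2 * ((n:ℝ) + 1) * sq) :=
      div_le_div₀ hxp.le e1 (by positivity)
        (mul_le_mul_of_nonneg_left hsqL (by positivity))
    calc (4:ℝ) / (n:ℝ) ^ 5 ≤ 4 / (n:ℝ) ^ 3 := k1
      _ ≤ 200 * L ^ 3 / ((n:ℝ) ^ 2 * ((n:ℝ) + 1)) := k2
      _ = (400 * L ^ 4 / (n:ℝ) ^ 2) / (2 * ((n:ℝ) + 1) * L) := k3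
      _ ≤ x ^ p / (2 * ((n:ℝ) + 1) * sq) := k4
  have hfar2 : 2 * Cp * T ≤ 1 / sq * x ^ p * M := by
    calc 2 * Cp * T ≤ 2 * Cp * (2 / (n:ℝ) ^ 5) := by
          apply mul_le_mul_of_nonneg_left hT5 (by positivity)
      _ = Cp * (4 / (n:ℝ) ^ 5) := by ring
      _ ≤ Cp * (x ^ p / (2 * ((n:ℝ) + 1) * sq)) :=
          mul_le_mul_of_nonneg_left hkey hCp.le
      _ = 1 / sq * x ^ p * (Cp / (2 * ((n:ℝ) + 1))) := by
          field_simp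
      _ ≤ 1 / sq * x ^ p * M := by
          apply mul_le_mul_of_nonneg_left hM_lb (by positivity)
  -- conclusion
  have hfinal : |H n x - G n x| ≤ 4 / sq * (x ^ p * M) := by
    have h1 := habs
    rw [hsplit] at h1
    have h2 : 3 / sq * x ^ p * M + 1 / sq * x ^ p * M = 4 / sq * (x ^ p * M) := by
      field_simp
      ring
    calc |H n x - G n x| ≤
        (∑ i ∈ (Finset.range (n + 1)).filter Pn, b i * r i * |x ^ p - ((i:ℝ) / n) ^ p|)
        + ∑ i ∈ (Finset.range (n + 1)).filter (fun i => ¬ Pn i),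
            b i * r i * |x ^ p - ((i:ℝ) / n) ^ p| := h1
      _ ≤ 3 / sq * x ^ p * M + 2 * Cp * T := add_le_add hnear hfar
      _ ≤ 3 / sq * x ^ p * M + 1 / sq * x ^ p * M := by linarith
      _ = 4 / sq * (x ^ p * M) := h2
  calc |H n x - G n x| ≤ 4 / sq * (x ^ p * M) := hfinal
    _ = 4 * (x ^ p * M) / sq := by ring
    _ = 4 * H n x / sq := by rw [hHM]
end

section
/- Fix 1 ≤ p ≤ 2, C_p > 0, c > 0, and r_i = C_p/(i^{p/2}+1). Let H_n(x) = Σ_{i=0}^n C(n,i) r_i x^{i+p} (1−x)^{n−i}. Then there exists k' > 0 such that for all sufficiently large n and all x with x ≥ c·(log n)²/n, H_n(x)/x ≥ k' · n^{−3p/2}. -/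
open Filter Set Real

theorem stmt_8 (p Cp c : ℝ) (hp1 : 1 ≤ p) (hp2 : p ≤ 2) (hCp : 0 < Cp) (hc : 0 < c)
    (r : ℕ → ℝ) (hr : ∀ i, r i = Cp / ((i : ℝ) ^ (p / 2) + 1))
    (H : ℕ → ℝ → ℝ)
    (hH : ∀ n x, H n x = ∑ i ∈ Finset.range (n + 1),
        (n.choose i : ℝ) * r i * x ^ ((i : ℝ) + p) * (1 - x) ^ (n - i)) :
    ∃ k' > (0:ℝ), ∃ N : ℕ, ∀ n ≥ N, ∀ x : ℝ,
      c * (Real.log n) ^ 2 / n ≤ x → x ≤ 1 →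
      k' * (n : ℝ) ^ (-(3 * p) / 2) ≤ H n x / x := by
  refine ⟨Cp / 2, by positivity, ⌈Real.exp (c⁻¹ + 1)⌉₊ + 1, ?_⟩
  intro n hn x hx hx1
  have hnR : Real.exp (c⁻¹ + 1) ≤ (n : ℝ) := by
    calc Real.exp (c⁻¹ + 1) ≤ (⌈Real.exp (c⁻¹ + 1)⌉₊ : ℝ) := Nat.le_ceil _
    _ ≤ (n : ℝ) := by exact_mod_cast le_trans (Nat.le_succ _) hn
  have hn1 : (1 : ℝ) ≤ (n : ℝ) := by
    refine le_trans ?_ hnR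
    rw [show (1:ℝ) = Real.exp 0 by simp]
    exact Real.exp_le_exp.mpr (by positivity)
  have hn0 : (0 : ℝ) < (n : ℝ) := lt_of_lt_of_le one_pos hn1
  have hlog : c⁻¹ + 1 ≤ Real.log n := by
    rw [← Real.log_exp (c⁻¹ + 1)]
    exact Real.log_le_log (Real.exp_pos _) hnR
  have hinvn : 1 / (n : ℝ) ≤ x := by
    have hci : (0:ℝ) < c⁻¹ := inv_pos.mpr hc
    have h1 : (1 : ℝ) ≤ c * (Real.log n) ^ 2 := by
      have h2 : c⁻¹ ≤ (Real.log n) ^ 2 := by nlinarith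
      calc (1:ℝ) = c * c⁻¹ := (mul_inv_cancel₀ (ne_of_gt hc)).symm
      _ ≤ c * (Real.log n) ^ 2 := by nlinarith
    calc 1 / (n:ℝ) ≤ c * (Real.log n) ^ 2 / n := by gcongr
    _ ≤ x := hx
  have hx0 : (0 : ℝ) < x := lt_of_lt_of_le (by positivity) hinvn
  set A : ℝ := Cp / ((n : ℝ) ^ (p / 2) + 1) with hA
  have hnp : (0:ℝ) ≤ (n : ℝ) ^ (p / 2) := Real.rpow_nonneg (le_of_lt hn0) _
  have hA0 : 0 < A := by
    apply div_pos hCp; positivity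
  have hHlb : A * x ^ p ≤ H n x := by
    rw [hH]
    have hsum : ∑ i ∈ Finset.range (n + 1),
        x ^ i * (1 - x) ^ (n - i) * (n.choose i : ℝ) = 1 := by
      rw [← add_pow]
      norm_num
    calc A * x ^ p
        = ∑ i ∈ Finset.range (n + 1),
            (x ^ i * (1 - x) ^ (n - i) * (n.choose i : ℝ)) * (A * x ^ p) := by
          rw [← Finset.sum_mul, hsum, one_mul]
      _ ≤ ∑ i ∈ Finset.range (n + 1),
            (n.choose i : ℝ) * r i * x ^ ((i : ℝ) + p) * (1 - x) ^ (n - i) := by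
          apply Finset.sum_le_sum
          intro i hi
          have hi' : i ≤ n := Nat.lt_succ_iff.mp (Finset.mem_range.mp hi)
          have hrA : A ≤ r i := by
            rw [hr]
            apply div_le_div_of_nonneg_left hCp.le (by positivity) ?_
            have : (i:ℝ) ^ (p/2) ≤ (n:ℝ) ^ (p/2) :=
              Real.rpow_le_rpow (Nat.cast_nonneg i) (by exact_mod_cast hi') (by linarith)
            linarith
          have hxip : x ^ ((i : ℝ) + p) = x ^ i * x ^ p := by
            rw [Real.rpow_add hx0, Real.rpow_natCast]
          rw [hxip]
          have h1x : (0:ℝ) ≤ 1 - x := by linarith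
          have hpos : (0:ℝ) ≤ (n.choose i : ℝ) * (x ^ i * x ^ p) * (1 - x) ^ (n - i) := by
            have := Real.rpow_nonneg (le_of_lt hx0) p
            positivity
          nlinarith [mul_le_mul_of_nonneg_right hrA hpos]
  rw [le_div_iff₀ hx0]
  refine le_trans ?_ hHlb
  have hxp : x ^ p = x ^ (p - 1) * x := by
    rw [show p = (p - 1) + 1 by ring, Real.rpow_add hx0, Real.rpow_one]
    ring_nf
  rw [hxp, ← mul_assoc]
  apply mul_le_mul_of_nonneg_right ?_ (le_of_lt hx0)
  -- Cp / 2 * n ^ (-(3p)/2) ≤ A * x ^ (p-1)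
  have hxpm : ((n:ℝ))⁻¹ ^ (p - 1) ≤ x ^ (p - 1) := by
    apply Real.rpow_le_rpow (by positivity) (by rwa [inv_eq_one_div]) (by linarith)
  have hinvpow : ((n:ℝ))⁻¹ ^ (p - 1) = (n:ℝ) ^ (-(p - 1)) := by
    rw [Real.inv_rpow (le_of_lt hn0), ← Real.rpow_neg (le_of_lt hn0)]
  have hA2 : Cp / (2 * (n:ℝ) ^ (p / 2)) ≤ A := by
    rw [hA]
    apply div_le_div_of_nonneg_left hCp.le (by positivity)
    have : (1:ℝ) ≤ (n:ℝ) ^ (p / 2) := Real.one_le_rpow hn1 (by linarith)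
    linarith
  calc Cp / 2 * (n:ℝ) ^ (-(3 * p) / 2)
      ≤ Cp / 2 * (n:ℝ) ^ (1 - 3 * p / 2) := by
        apply mul_le_mul_of_nonneg_left
          (Real.rpow_le_rpow_of_exponent_le hn1 (by linarith)) (by positivity)
    _ = (Cp / (2 * (n:ℝ) ^ (p / 2))) * (n:ℝ) ^ (-(p - 1)) := by
        rw [show (1 - 3 * p / 2 : ℝ) = -(p/2) + -(p-1) by ring,
          Real.rpow_add hn0, Real.rpow_neg (le_of_lt hn0) (p/2)]
        field_simp
    _ ≤ A * x ^ (p - 1) := by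
        apply mul_le_mul hA2 (hinvpow ▸ hxpm) (by positivity) (le_of_lt hA0)
end

section
/- Let f : (0,∞) → ℝ be convex with f(1) = 0 and satisfy lim_{t→0⁺} |f(t)| < ∞ and lim_{t→0⁺} t|f'(t)| < ∞. Then for any constants a, b > 0, the function φ(s) = (1/a)·f(s·a·b) − s·b·f'(s·a·b) is bounded on (0, 1/(a·b)] (i.e., as s ranges over values with s·a·b ∈ (0,1]). -/
open Set Filter

theorem stmt_13 (f : ℝ → ℝ)
    (hconv : ConvexOn ℝ (Ioi (0:ℝ)) f)
    (hdiff : DifferentiableOn ℝ f (Ioi (0:ℝ)))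
    (hf1 : f 1 = 0)
    (hlim0 : ∃ L : ℝ, Tendsto (fun t => |f t|) (nhdsWithin 0 (Ioi 0)) (nhds L))
    (hlim1 : ∃ L' : ℝ, Tendsto (fun t => t * |deriv f t|) (nhdsWithin 0 (Ioi 0)) (nhds L'))
    (a b : ℝ) (ha : 0 < a) (hb : 0 < b) :
    ∃ M : ℝ, ∀ s ∈ Ioc (0:ℝ) (1 / (a * b)),
      |(1 / a) * f (s * a * b) - s * b * deriv f (s * a * b)| ≤ M := by
  obtain ⟨L, hL⟩ := hlim0
  obtain ⟨L', hL'⟩ := hlim1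
  -- eventual bounds near 0
  have hev : ∀ᶠ t in nhdsWithin 0 (Ioi 0), |f t| < L + 1 ∧ t * |deriv f t| < L' + 1 := by
    filter_upwards [hL.eventually_lt_const (lt_add_one L), hL'.eventually_lt_const (lt_add_one L')]
      with t h1 h2 using ⟨h1, h2⟩
  rw [eventually_iff] at hev
  obtain ⟨u, hu, huS⟩ := mem_nhdsGT_iff_exists_Ioo_subset.mp hev
  set ε : ℝ := min (u / 2) 1 with hε
  have hε0 : 0 < ε := lt_min (by simpa using (half_pos (mem_Ioi.mp hu))) one_pos
  have hε1 : ε ≤ 1 := min_le_right _ _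
  have hεu : ε < u := lt_of_le_of_lt (min_le_left _ _) (by linarith [mem_Ioi.mp hu])
  -- differentiability pointwise
  have hdiffAt : ∀ x ∈ Ioi (0:ℝ), DifferentiableAt ℝ f x := fun x hx =>
    hdiff.differentiableAt (isOpen_Ioi.mem_nhds hx)
  have hmono := hconv.monotoneOn_deriv hdiffAt
  -- bound on [ε, 1]
  have hcont : ContinuousOn f (Icc ε 1) := by
    apply hdiff.continuousOn.mono
    intro x hx; exact lt_of_lt_of_le hε0 hx.1
  obtain ⟨C, hC⟩ := (isCompact_Icc).exists_bound_of_continuousOn hcont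
  set D : ℝ := max |deriv f ε| |deriv f 1| with hD
  have hderivBound : ∀ t ∈ Icc ε (1:ℝ), |deriv f t| ≤ D := by
    intro t ht
    have htpos : (0:ℝ) < t := lt_of_lt_of_le hε0 ht.1
    have h1 : deriv f ε ≤ deriv f t := hmono (mem_Ioi.mpr hε0) (mem_Ioi.mpr htpos) ht.1
    have h2 : deriv f t ≤ deriv f 1 := hmono (mem_Ioi.mpr htpos) (mem_Ioi.mpr one_pos) ht.2
    rw [abs_le]
    constructor
    · calc -D ≤ -|deriv f ε| := by simp [hD]
        _ ≤ deriv f ε := neg_abs_le _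
        _ ≤ deriv f t := h1
    · calc deriv f t ≤ deriv f 1 := h2
        _ ≤ |deriv f 1| := le_abs_self _
        _ ≤ D := le_max_right _ _
  set B1 : ℝ := max (L + 1) C with hB1
  set B2 : ℝ := max (L' + 1) D with hB2
  have key : ∀ t ∈ Ioc (0:ℝ) 1, |f t| ≤ B1 ∧ t * |deriv f t| ≤ B2 := by
    intro t ht
    rcases lt_or_ge t ε with hlt | hge
    · have htu : t ∈ Ioo (0:ℝ) u := ⟨ht.1, lt_trans hlt hεu⟩
      obtain ⟨h1, h2⟩ := huS htu
      exact ⟨le_trans h1.le (le_max_left _ _), le_trans h2.le (le_max_left _ _)⟩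
    · have htI : t ∈ Icc ε 1 := ⟨hge, ht.2⟩
      refine ⟨le_trans ?_ (le_max_right _ _), le_trans ?_ (le_max_right _ _)⟩
      · simpa using hC t htI
      · calc t * |deriv f t| ≤ 1 * |deriv f t| :=
              mul_le_mul_of_nonneg_right ht.2 (abs_nonneg _)
          _ = |deriv f t| := one_mul _
          _ ≤ D := hderivBound t htI
  refine ⟨(1 / a) * (B1 + B2), ?_⟩
  intro s hs
  set t : ℝ := s * a * b with htdef
  have hab : 0 < a * b := mul_pos ha hb
  have htpos : 0 < t := mul_pos (mul_pos hs.1 ha) hb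
  have htle : t ≤ 1 := by
    have := hs.2
    rw [htdef, mul_assoc]
    calc s * (a * b) ≤ (1 / (a * b)) * (a * b) :=
          mul_le_mul_of_nonneg_right this hab.le
      _ = 1 := by field_simp
  have hkey := key t ⟨htpos, htle⟩
  have hsb : s * b = t / a := by
    rw [htdef]; field_simp
  have : (1 / a) * f t - s * b * deriv f t = (1/a) * (f t - t * deriv f t) := by
    rw [hsb]; field_simp
  rw [this, abs_mul]
  have h1a : |(1:ℝ)/a| = 1/a := abs_of_pos (by positivity)
  rw [h1a]
  apply mul_le_mul_of_nonneg_left _ (by positivity)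
  calc |f t - t * deriv f t| ≤ |f t| + |t * deriv f t| := abs_sub _ _
    _ = |f t| + t * |deriv f t| := by rw [abs_mul, abs_of_pos htpos]
    _ ≤ B1 + B2 := add_le_add hkey.1 hkey.2
end

section
/- Let 1 ≤ p ≤ 2, C > 0, 1/2 < α < 1, and let (r_m)_{m≥0} be a nonincreasing sequence of nonnegative reals with m^{p/2} r_m → C_p as m → ∞. Let k ≥ 1 be an integer and T ~ Bin(m, 1/k). Then Σ_{i=0}^m P(T = i) r_i ≥ (1 − 2 e^{−C² m^{2α−1}}) · r_{⌈m/k + C m^α⌉}, and consequently liminf_{m→∞} m^{p/2} Σ_{i=0}^m P(T = i) r_i ≥ C_p · k^{p/2}. -/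
/-!
The count `T ~ Bin(m, q)` concentrates around `m q` at scale `√m`: by Hoeffding's lemma for a
Bernoulli variable, `E e^{tT} ≤ e^{m (t q + t² / 8)}`, so the Chernoff bound gives
`P(T ≥ m q + a) ≤ e^{-2a²/m}` and `P(T ≤ m q - a) ≤ e^{-2a²/m}`. Since `r` is nonincreasing,
the upper tail bound with `a = C m^α` yields the lower bound `(1 - 2e^{-C² m^{2α-1}}) r_N` with
`N = ⌈m/k + C m^α⌉`, and `N / m → 1/k` turns it into the `liminf` bound. The `liminf` of a real
sequence is only meaningful for sequences bounded above; here `m^{p/2} 𝔼 r_T` is, by the lower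
tail bound with `a = m q / 2`.
-/

open Filter Real Finset Topology

theorem sq_mul_rpow_div_self {x : ℝ} (hx : 0 ≤ x) (C : ℝ) {α : ℝ} (hα : 2 * α - 1 ≠ 0) :
    (C * x ^ α) ^ 2 / x = C ^ 2 * x ^ (2 * α - 1) := by
  rcases hx.eq_or_lt with rfl | hx
  · simp [zero_rpow hα]
  · rw [rpow_sub_one hx.ne', mul_pow, ← rpow_natCast (x ^ α), ← rpow_mul hx.le, mul_div_assoc]
    norm_num [mul_comm]

theorem tendsto_natCast_comp_div {g : ℝ → ℕ} (hg : Tendsto (fun x => (g x : ℝ) / x) atTop (𝓝 1))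
    {f : ℕ → ℝ} {c : ℝ} (hc : 0 < c) (hf : Tendsto (fun m : ℕ => f m / m) atTop (𝓝 c)) :
    Tendsto (fun m : ℕ => (g (f m) : ℝ) / m) atTop (𝓝 c) := by
  have hf_top : Tendsto f atTop atTop :=
    (hf.pos_mul_atTop hc tendsto_natCast_atTop_atTop).congr' <|
      (eventually_ne_atTop 0).mono fun m hm => div_mul_cancel₀ _ (Nat.cast_ne_zero.2 hm)
  simpa using ((hg.comp hf_top).mul hf).congr' <|
    (hf_top.eventually_ne_atTop 0).mono fun m hm => div_mul_div_cancel₀ hm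

theorem tendsto_rpow_mul_comp_of_tendsto_div {r : ℕ → ℝ} {s L : ℝ}
    (hr : Tendsto (fun m : ℕ => (m : ℝ) ^ s * r m) atTop (𝓝 L)) {N : ℕ → ℕ} {c : ℝ} (hc : 0 < c)
    (hN : Tendsto (fun m => (N m : ℝ) / m) atTop (𝓝 c)) :
    Tendsto (fun m : ℕ => (m : ℝ) ^ s * r (N m)) atTop (𝓝 (c⁻¹ ^ s * L)) := by
  have hN_top : Tendsto N atTop atTop := by
    rw [← tendsto_natCast_atTop_iff (R := ℝ)]
    exact (hN.pos_mul_atTop hc tendsto_natCast_atTop_atTop).congr' <|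
      (eventually_ne_atTop 0).mono fun m hm => div_mul_cancel₀ _ (Nat.cast_ne_zero.2 hm)
  have hinv : Tendsto (fun m : ℕ => ((m : ℝ) / N m) ^ s) atTop (𝓝 (c⁻¹ ^ s)) := by
    simpa only [inv_div] using (hN.inv₀ hc.ne').rpow_const (Or.inl (inv_ne_zero hc.ne'))
  refine (hinv.mul (hr.comp hN_top)).congr' ?_
  filter_upwards [hN_top.eventually_ne_atTop 0] with m hm
  rw [Function.comp_apply, ← mul_assoc, ← mul_rpow (by positivity) (by positivity),
    div_mul_cancel₀ _ (Nat.cast_ne_zero.2 hm)]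

theorem tendsto_div_add_mul_rpow_div (b C : ℝ) {α : ℝ} (hα : α < 1) :
    Tendsto (fun x : ℝ => (x / b + C * x ^ α) / x) atTop (𝓝 b⁻¹) := by
  have hpow : Tendsto (fun x : ℝ => x ^ (α - 1)) atTop (𝓝 0) := by
    simpa only [neg_sub] using tendsto_rpow_neg_atTop (sub_pos.2 hα)
  have := tendsto_const_nhds (x := b⁻¹).add (hpow.const_mul C)
  rw [mul_zero, add_zero] at this
  refine this.congr' ?_
  filter_upwards [eventually_gt_atTop 0] with x hx
  rw [rpow_sub_one hx.ne', add_div, div_div_cancel_left' hx.ne', mul_div_assoc]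

theorem tendsto_one_sub_two_mul_exp_neg {C β : ℝ} (hC : C ≠ 0) (hβ : 0 < β) :
    Tendsto (fun m : ℕ => 1 - 2 * exp (-C ^ 2 * (m : ℝ) ^ β)) atTop (𝓝 1) := by
  have h := ((tendsto_rpow_atTop hβ).comp tendsto_natCast_atTop_atTop).const_mul_atTop_of_neg
    (neg_lt_zero.2 (pow_pos (abs_pos.2 hC) 2 |>.trans_eq (sq_abs C)))
  simpa using (tendsto_exp_atBot.comp h).const_mul 2 |>.const_sub 1

open ProbabilityTheory MeasureTheory in
theorem one_sub_add_mul_exp_le_exp {q : ℝ} (hq0 : 0 ≤ q) (hq1 : q ≤ 1) (t : ℝ) :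
    1 - q + q * exp t ≤ exp (t * q + t ^ 2 / 8) := by
  have hoeffding := (hasSubgaussianMGF_of_mem_Icc (μ := Ber(true, false, ⟨q, hq0, hq1⟩))
    (X := fun b => if b then (1 : ℝ) else 0) (a := 0) (b := 1)
    (measurable_of_finite _).aemeasurable (ae_of_all _ fun b => by cases b <;> simp)).mgf_le t
  simp only [mgf, integral_bernoulliMeasure] at hoeffding
  norm_num at hoeffding
  calc 1 - q + q * exp t
      = (q * exp (t * (1 - q)) + (1 - q) * exp (-(t * q))) * exp (t * q) := by
        rw [add_mul, mul_assoc, mul_assoc, ← exp_add, ← exp_add, neg_add_cancel, exp_zero,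
          show t * (1 - q) + t * q = t by ring]
        ring
    _ ≤ exp (1 / 4 * t ^ 2 / 2) * exp (t * q) := by gcongr
    _ = exp (t * q + t ^ 2 / 8) := by rw [← exp_add]; ring_nf

noncomputable def binomWeight (m : ℕ) (q : ℝ) (i : ℕ) : ℝ :=
  m.choose i * q ^ i * (1 - q) ^ (m - i)

namespace binomWeight

variable {m : ℕ} {q : ℝ}

theorem nonneg (hq0 : 0 ≤ q) (hq1 : q ≤ 1) (i : ℕ) : 0 ≤ binomWeight m q i := by
  have : 0 ≤ 1 - q := by linarith
  unfold binomWeight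
  positivity

theorem sum_mul_exp (t : ℝ) :
    ∑ i ∈ range (m + 1), binomWeight m q i * exp (t * i) = (1 - q + q * exp t) ^ m := by
  rw [add_comm (1 - q), add_pow]
  refine sum_congr rfl fun i _ => ?_
  rw [binomWeight, mul_pow, ← exp_nat_mul, mul_comm t]
  ring

theorem sum_eq_one : ∑ i ∈ range (m + 1), binomWeight m q i = 1 := by
  simpa using sum_mul_exp (m := m) (q := q) 0

theorem sum_le_one (hq0 : 0 ≤ q) (hq1 : q ≤ 1) {s : Finset ℕ} (hs : s ⊆ range (m + 1)) :
    ∑ i ∈ s, binomWeight m q i ≤ 1 :=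
  (sum_le_sum_of_subset_of_nonneg hs fun i _ _ => nonneg hq0 hq1 i).trans_eq sum_eq_one

theorem sum_le_exp_of_le_mul (hq0 : 0 ≤ q) (hq1 : q ≤ 1) {s : Finset ℕ}
    (hs : s ⊆ range (m + 1)) {t b : ℝ} (h : ∀ i ∈ s, b ≤ t * i) :
    ∑ i ∈ s, binomWeight m q i ≤ exp (m * (t * q + t ^ 2 / 8) - b) := by
  calc ∑ i ∈ s, binomWeight m q i
      ≤ ∑ i ∈ s, exp (-b) * (binomWeight m q i * exp (t * i)) := by
        refine sum_le_sum fun i hi => ?_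
        rw [mul_left_comm, ← exp_add]
        exact le_mul_of_one_le_right (nonneg hq0 hq1 i) (one_le_exp (by linarith [h i hi]))
    _ ≤ exp (-b) * ∑ i ∈ range (m + 1), binomWeight m q i * exp (t * i) := by
        rw [← mul_sum]
        gcongr
        exact fun i _ _ => mul_nonneg (nonneg hq0 hq1 i) (exp_pos _).le
    _ ≤ exp (-b) * exp (t * q + t ^ 2 / 8) ^ m := by
        rw [sum_mul_exp]
        gcongr
        exact one_sub_add_mul_exp_le_exp hq0 hq1 t
    _ = exp (m * (t * q + t ^ 2 / 8) - b) := by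
        rw [← exp_nat_mul, ← exp_add]; ring_nf

theorem sum_le_exp_of_mul_add_le (hq0 : 0 ≤ q) (hq1 : q ≤ 1) {s : Finset ℕ} (hs : s ⊆ range (m + 1))
    {a : ℝ} (ha : 0 ≤ a) (h : ∀ i ∈ s, m * q + a ≤ i) :
    ∑ i ∈ s, binomWeight m q i ≤ exp (-2 * a ^ 2 / m) := by
  -- `t = 4a/m` minimizes the Chernoff exponent `m t² / 8 - t a`.
  have ht : 0 ≤ 4 * a / m := by positivity
  convert sum_le_exp_of_le_mul hq0 hq1 hs (t := 4 * a / m) fun i hi =>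
    mul_le_mul_of_nonneg_left (h i hi) ht using 2
  rcases eq_or_ne (m : ℝ) 0 with hm | hm
  · simp [hm]
  · field_simp; ring

theorem sum_le_exp_of_add_le_mul (hq0 : 0 ≤ q) (hq1 : q ≤ 1) {s : Finset ℕ} (hs : s ⊆ range (m + 1))
    {a : ℝ} (ha : 0 ≤ a) (h : ∀ i ∈ s, i + a ≤ m * q) :
    ∑ i ∈ s, binomWeight m q i ≤ exp (-2 * a ^ 2 / m) := by
  have ht : -(4 * a / m) ≤ 0 := by simp only [neg_nonpos]; positivity
  convert sum_le_exp_of_le_mul hq0 hq1 hs (t := -(4 * a / m)) fun i hi =>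
    mul_le_mul_of_nonpos_left (show (i : ℝ) ≤ m * q - a by linarith [h i hi]) ht using 2
  rcases eq_or_ne (m : ℝ) 0 with hm | hm
  · simp [hm]
  · field_simp; ring

variable {r : ℕ → ℝ}

theorem mul_le_sum_mul_of_mul_add_le (hq0 : 0 ≤ q) (hq1 : q ≤ 1) (hr0 : ∀ i, 0 ≤ r i)
    (hr : Antitone r) {N : ℕ} {a : ℝ} (ha : 0 ≤ a) (hN : m * q + a ≤ N) :
    (1 - exp (-2 * a ^ 2 / m)) * r N ≤ ∑ i ∈ range (m + 1), binomWeight m q i * r i := by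
  have htail : ∑ i ∈ range (m + 1) with ¬i ≤ N, binomWeight m q i ≤ exp (-2 * a ^ 2 / m) :=
    sum_le_exp_of_mul_add_le hq0 hq1 (filter_subset _ _) ha fun i hi =>
      hN.trans (by exact_mod_cast (not_le.1 (mem_filter.1 hi).2).le)
  have hsplit := sum_filter_add_sum_filter_not (range (m + 1)) (· ≤ N) (binomWeight m q)
  rw [sum_eq_one] at hsplit
  calc (1 - exp (-2 * a ^ 2 / m)) * r N
      ≤ (∑ i ∈ range (m + 1) with i ≤ N, binomWeight m q i) * r N := by
        gcongr
        · exact hr0 N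
        · linarith
    _ = ∑ i ∈ range (m + 1) with i ≤ N, binomWeight m q i * r N := sum_mul ..
    _ ≤ ∑ i ∈ range (m + 1) with i ≤ N, binomWeight m q i * r i :=
        sum_le_sum fun i hi => mul_le_mul_of_nonneg_left (hr (mem_filter.1 hi).2) (nonneg hq0 hq1 i)
    _ ≤ ∑ i ∈ range (m + 1), binomWeight m q i * r i :=
        sum_le_sum_of_subset_of_nonneg (filter_subset _ _) fun i _ _ =>
          mul_nonneg (nonneg hq0 hq1 i) (hr0 i)

theorem sum_mul_le_of_add_le_mul (hq0 : 0 ≤ q) (hq1 : q ≤ 1) (hr0 : ∀ i, 0 ≤ r i)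
    (hr : Antitone r) {M : ℕ} {a : ℝ} (ha : 0 ≤ a) (hM : M + a ≤ m * q) :
    ∑ i ∈ range (m + 1), binomWeight m q i * r i ≤ exp (-2 * a ^ 2 / m) * r 0 + r M := by
  rw [← sum_filter_add_sum_filter_not _ (· < M)]
  gcongr ?_ + ?_
  · calc ∑ i ∈ range (m + 1) with i < M, binomWeight m q i * r i
        ≤ (∑ i ∈ range (m + 1) with i < M, binomWeight m q i) * r 0 := by
          rw [sum_mul]
          exact sum_le_sum fun i _ => mul_le_mul_of_nonneg_left (hr i.zero_le) (nonneg hq0 hq1 i)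
      _ ≤ exp (-2 * a ^ 2 / m) * r 0 := by
          refine mul_le_mul_of_nonneg_right (sum_le_exp_of_add_le_mul hq0 hq1 (filter_subset _ _) ha
            fun i hi => le_trans ?_ hM) (hr0 0)
          gcongr
          exact_mod_cast (mem_filter.1 hi).2.le
  · calc ∑ i ∈ range (m + 1) with ¬i < M, binomWeight m q i * r i
        ≤ (∑ i ∈ range (m + 1) with ¬i < M, binomWeight m q i) * r M := by
          rw [sum_mul]
          exact sum_le_sum fun i hi =>
            mul_le_mul_of_nonneg_left (hr (not_lt.1 (mem_filter.1 hi).2)) (nonneg hq0 hq1 i)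
      _ ≤ r M := mul_le_of_le_one_left (hr0 M) (sum_le_one hq0 hq1 (filter_subset _ _))

theorem one_sub_two_mul_exp_mul_le_sum_mul (hq0 : 0 ≤ q) (hq1 : q ≤ 1) (hr0 : ∀ i, 0 ≤ r i)
    (hr : Antitone r) {C α : ℝ} (hC : 0 ≤ C) (hα : 2 * α - 1 ≠ 0) {N : ℕ}
    (hN : m * q + C * m ^ α ≤ N) :
    (1 - 2 * exp (-C ^ 2 * (m : ℝ) ^ (2 * α - 1))) * r N ≤
      ∑ i ∈ range (m + 1), binomWeight m q i * r i := by
  refine le_trans ?_ (mul_le_sum_mul_of_mul_add_le hq0 hq1 hr0 hr (by positivity) hN)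
  gcongr ?_ * _
  · exact hr0 N
  rw [mul_div_assoc, sq_mul_rpow_div_self (Nat.cast_nonneg m) C hα]
  have hx : 0 ≤ C ^ 2 * (m : ℝ) ^ (2 * α - 1) := by positivity
  have := exp_le_exp.2 (show -2 * (C ^ 2 * (m : ℝ) ^ (2 * α - 1)) ≤ -C ^ 2 * m ^ (2 * α - 1) by
    linarith)
  linarith [exp_pos (-C ^ 2 * (m : ℝ) ^ (2 * α - 1))]

theorem isBoundedUnder_rpow_mul_sum_mul (hq0 : 0 < q) (hq1 : q ≤ 1) (hr0 : ∀ i, 0 ≤ r i)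
    (hr : Antitone r) {s L : ℝ} (hrL : Tendsto (fun m : ℕ => (m : ℝ) ^ s * r m) atTop (𝓝 L)) :
    IsBoundedUnder (· ≤ ·) atTop
      (fun m : ℕ => (m : ℝ) ^ s * ∑ i ∈ range (m + 1), binomWeight m q i * r i) := by
  set M : ℕ → ℕ := fun m => ⌊m * q / 2⌋₊
  have hbound (m : ℕ) :
      ∑ i ∈ range (m + 1), binomWeight m q i * r i ≤ exp (-(q ^ 2 / 2) * m) * r 0 + r (M m) := by
    have hM : (M m : ℝ) + m * q / 2 ≤ m * q := by
      linarith [Nat.floor_le (show 0 ≤ (m : ℝ) * q / 2 by positivity)]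
    convert sum_mul_le_of_add_le_mul hq0.le hq1 hr0 hr (by positivity) hM using 4
    rcases eq_or_ne (m : ℝ) 0 with hm | hm
    · simp [hm]
    · field_simp
  have hM : Tendsto (fun m : ℕ => (M m : ℝ) / m) atTop (𝓝 (q / 2)) :=
    tendsto_natCast_comp_div tendsto_nat_floor_div_atTop (by positivity) <|
      tendsto_const_nhds.congr' <| (eventually_ne_atTop 0).mono fun m hm => by field_simp
  have hlim := (((tendsto_rpow_mul_exp_neg_mul_atTop_nhds_zero s (q ^ 2 / 2) (by positivity)).comp
    tendsto_natCast_atTop_atTop).mul_const (r 0)).add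
      (tendsto_rpow_mul_comp_of_tendsto_div hrL (by positivity) hM)
  refine hlim.isBoundedUnder_le.mono_le (Eventually.of_forall fun m => ?_)
  calc (m : ℝ) ^ s * ∑ i ∈ range (m + 1), binomWeight m q i * r i
      ≤ (m : ℝ) ^ s * (exp (-(q ^ 2 / 2) * m) * r 0 + r (M m)) := by gcongr; exact hbound m
    _ = _ := by simp only [Function.comp_apply]; ring

end binomWeight

theorem stmt_15_general (p Cp C α : ℝ) (hC : 0 < C)
    (hα1 : 1 / 2 < α) (hα2 : α < 1)
    (r : ℕ → ℝ) (hr0 : ∀ i, 0 ≤ r i) (hrmono : Antitone r)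
    (hrlim : Tendsto (fun m : ℕ => (m : ℝ) ^ (p / 2) * r m) atTop (nhds Cp))
    (k : ℕ) (hk : 1 ≤ k) :
    (∀ m : ℕ,
        (∑ i ∈ Finset.range (m + 1),
            (m.choose i : ℝ) * (1 / k) ^ i * (1 - 1 / k) ^ (m - i) * r i) ≥
          (1 - 2 * Real.exp (-C ^ 2 * (m : ℝ) ^ (2 * α - 1))) *
            r ⌈(m : ℝ) / k + C * (m : ℝ) ^ α⌉₊) ∧
      Cp * (k : ℝ) ^ (p / 2) ≤
        Filter.liminf
          (fun m : ℕ =>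
            (m : ℝ) ^ (p / 2) *
              ∑ i ∈ Finset.range (m + 1),
                (m.choose i : ℝ) * (1 / k) ^ i * (1 - 1 / k) ^ (m - i) * r i)
          atTop := by
  have hk0 : (0 : ℝ) < k := by exact_mod_cast hk
  have hq0 : (0 : ℝ) < 1 / k := by positivity
  have hq1 : 1 / (k : ℝ) ≤ 1 := by rw [div_le_one hk0]; exact_mod_cast hk
  have hlower (m : ℕ) := binomWeight.one_sub_two_mul_exp_mul_le_sum_mul hq0.le hq1 hr0 hrmono
    hC.le (α := α) (by linarith) (m := m) (N := ⌈(m : ℝ) / k + C * (m : ℝ) ^ α⌉₊)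
    (by rw [mul_one_div]; exact Nat.le_ceil _)
  refine ⟨hlower, ?_⟩
  have hN : Tendsto (fun m : ℕ => (m : ℝ) ^ (p / 2) * r ⌈(m : ℝ) / k + C * (m : ℝ) ^ α⌉₊)
      atTop (𝓝 (k ^ (p / 2) * Cp)) := by
    simpa using tendsto_rpow_mul_comp_of_tendsto_div hrlim (inv_pos.2 hk0) <|
      tendsto_natCast_comp_div tendsto_nat_ceil_div_atTop (inv_pos.2 hk0) <|
        (tendsto_div_add_mul_rpow_div (k : ℝ) C hα2).comp tendsto_natCast_atTop_atTop
  have hlim := (tendsto_one_sub_two_mul_exp_neg hC.ne' (by linarith : 0 < 2 * α - 1)).mul hN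
  rw [one_mul, mul_comm ((k : ℝ) ^ (p / 2)) Cp] at hlim
  rw [← hlim.liminf_eq]
  refine liminf_le_liminf (Eventually.of_forall fun m => ?_) hlim.isBoundedUnder_ge
    (binomWeight.isBoundedUnder_rpow_mul_sum_mul hq0 hq1 hr0 hrmono hrlim).isCoboundedUnder_ge
  rw [mul_left_comm]
  gcongr
  exact hlower m

theorem stmt_15 (p Cp C α : ℝ) (hp1 : 1 ≤ p) (hp2 : p ≤ 2) (hC : 0 < C)
    (hα1 : 1 / 2 < α) (hα2 : α < 1)
    (r : ℕ → ℝ) (hr0 : ∀ i, 0 ≤ r i) (hrmono : Antitone r)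
    (hrlim : Tendsto (fun m : ℕ => (m : ℝ) ^ (p / 2) * r m) atTop (nhds Cp))
    (k : ℕ) (hk : 1 ≤ k) :
    (∀ m : ℕ,
        (∑ i ∈ Finset.range (m + 1),
            (m.choose i : ℝ) * (1 / k) ^ i * (1 - 1 / k) ^ (m - i) * r i) ≥
          (1 - 2 * Real.exp (-C ^ 2 * (m : ℝ) ^ (2 * α - 1))) *
            r ⌈(m : ℝ) / k + C * (m : ℝ) ^ α⌉₊) ∧
      Cp * (k : ℝ) ^ (p / 2) ≤
        Filter.liminf
          (fun m : ℕ =>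
            (m : ℝ) ^ (p / 2) *
              ∑ i ∈ Finset.range (m + 1),
                (m.choose i : ℝ) * (1 / k) ^ i * (1 - 1 / k) ^ (m - i) * r i)
          atTop :=
  stmt_15_general p Cp C α hC hα1 hα2 r hr0 hrmono hrlim k hk
end

section
/- Let C_f > 0 and let r_i be nonnegative reals with r_i ≤ 2 and i·r_i → C_f as i → ∞. Then for each fixed x ∈ (0,1], m · Σ_{i=0}^m C(m,i) x^{i+1} (1−x)^{m−i} r_i → C_f as m → ∞. Consequently, for a probability vector q on a finite set of size k with all entries positive, m · Σ_{x} (1/q(x)) Σ_{i=0}^m C(m,i) q(x)^{i+2} (1−q(x))^{m−i} r_i → k·C_f as m → ∞. -/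
open Filter Set Real

private lemma aux_term (j : ℕ) {c : ℝ} (hc0 : 0 ≤ c) (hc1 : c < 1) :
    Tendsto (fun n : ℕ => (n:ℝ)^j * c^(n-j)) atTop (nhds 0) := by
  rcases eq_or_lt_of_le hc0 with h0 | h0
  · apply Tendsto.congr' _ tendsto_const_nhds
    filter_upwards [eventually_ge_atTop (j+1)] with n hn
    rw [← h0, zero_pow (by omega), mul_zero]
  · have h := (tendsto_pow_const_mul_const_pow_of_lt_one j hc0 hc1).div_const (c^j)
    rw [zero_div] at h
    apply Tendsto.congr' _ h
    filter_upwards [eventually_ge_atTop j] with n hn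
    rw [mul_div_assoc, pow_sub₀ c (ne_of_gt h0) hn, div_eq_mul_inv]

private lemma lemA {x : ℝ} (hx0 : 0 < x) (hx1 : x ≤ 1) {g : ℕ → ℝ} {M L : ℝ}
    (hM : ∀ j, |g j| ≤ M) (hg : Tendsto g atTop (nhds L)) :
    Tendsto (fun n : ℕ => ∑ j ∈ Finset.range (n+1),
      (n.choose j : ℝ) * x^j * (1-x)^(n-j) * g j) atTop (nhds L) := by
  set c := 1 - x with hc
  have hc0 : 0 ≤ c := by simp [hc]; linarith
  have hc1 : c < 1 := by simp [hc]; linarith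
  set P : ℕ → ℕ → ℝ := fun n j => (n.choose j : ℝ) * x^j * c^(n-j) with hP
  have hPnn : ∀ n j, 0 ≤ P n j := fun n j =>
    mul_nonneg (mul_nonneg (by positivity) (by positivity)) (pow_nonneg hc0 _)
  have hsum1 : ∀ n, ∑ j ∈ Finset.range (n+1), P n j = 1 := by
    intro n
    have h := add_pow x c n
    rw [show x + c = 1 by ring, one_pow] at h
    calc ∑ j ∈ Finset.range (n+1), P n j
        = ∑ j ∈ Finset.range (n+1), x ^ j * c ^ (n - j) * (n.choose j : ℝ) := by
          apply Finset.sum_congr rfl; intro j _; simp [hP]; ring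
      _ = 1 := h.symm
  have key : Tendsto (fun n : ℕ => ∑ j ∈ Finset.range (n+1), P n j * (g j - L))
      atTop (nhds 0) := by
    rw [NormedAddCommGroup.tendsto_nhds_zero]
    intro ε hε
    obtain ⟨N, hN⟩ := Metric.tendsto_atTop.1 hg (ε/2) (half_pos hε)
    have hD : Tendsto (fun n : ℕ => (M + |L| + 1) *
        ∑ j ∈ Finset.range N, (n:ℝ)^j * c^(n-j)) atTop (nhds 0) := by
      have := Tendsto.const_mul (M + |L| + 1)
        (tendsto_finset_sum (Finset.range N) (fun j _ => aux_term j hc0 hc1))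
      simpa using this
    filter_upwards [hD.eventually_lt_const (half_pos hε), eventually_ge_atTop N]
      with n h1 h2
    have habsg : ∀ j, |g j - L| ≤ M + |L| + 1 := by
      intro j
      have h3 : |g j - L| ≤ |g j| + |L| := by
        rw [sub_eq_add_neg]
        exact (abs_add_le _ _).trans_eq (by rw [abs_neg])
      linarith [hM j]
    have hbound1 : ∑ j ∈ Finset.range N, P n j * |g j - L| < ε/2 := by
      have step : ∀ j ∈ Finset.range N,
          P n j * |g j - L| ≤ ((n:ℝ)^j * c^(n-j)) * (M + |L| + 1) := by
        intro j _
        have h1' : (n.choose j : ℝ) ≤ (n:ℝ)^j := by exact_mod_cast Nat.choose_le_pow n j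
        have h2' : x ^ j ≤ 1 := pow_le_one₀ hx0.le hx1
        have hPle : P n j ≤ (n:ℝ)^j * c^(n-j) := by
          have h4 : (0:ℝ) ≤ c^(n-j) := pow_nonneg hc0 _
          have h5 : (0:ℝ) ≤ x^j := by positivity
          have h6 : (0:ℝ) ≤ (n.choose j:ℝ) := by positivity
          have : (n.choose j : ℝ) * x^j ≤ (n:ℝ)^j := by nlinarith
          calc P n j = ((n.choose j:ℝ) * x^j) * c^(n-j) := rfl
            _ ≤ (n:ℝ)^j * c^(n-j) := mul_le_mul_of_nonneg_right this h4
        exact mul_le_mul hPle (habsg j) (abs_nonneg _) (by positivity)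
      calc ∑ j ∈ Finset.range N, P n j * |g j - L|
          ≤ ∑ j ∈ Finset.range N, ((n:ℝ)^j * c^(n-j)) * (M + |L| + 1) :=
            Finset.sum_le_sum step
        _ = (M + |L| + 1) * ∑ j ∈ Finset.range N, (n:ℝ)^j * c^(n-j) := by
            rw [Finset.mul_sum]; apply Finset.sum_congr rfl; intro j _; ring
        _ < ε/2 := h1
    have hbound2 : ∑ j ∈ Finset.Ico N (n+1), P n j * |g j - L| ≤ ε/2 := by
      calc ∑ j ∈ Finset.Ico N (n+1), P n j * |g j - L|
          ≤ ∑ j ∈ Finset.Ico N (n+1), P n j * (ε/2) := by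
            apply Finset.sum_le_sum
            intro j hj
            apply mul_le_mul_of_nonneg_left _ (hPnn n j)
            have := hN j (Finset.mem_Ico.1 hj).1
            rw [Real.dist_eq] at this
            exact this.le
        _ ≤ ∑ j ∈ Finset.range (n+1), P n j * (ε/2) := by
            apply Finset.sum_le_sum_of_subset_of_nonneg
            · rw [Finset.range_eq_Ico]
              exact Finset.Ico_subset_Ico (by omega) le_rfl
            · intro j _ _
              exact mul_nonneg (hPnn n j) (half_pos hε).le
        _ = ε/2 := by rw [← Finset.sum_mul, hsum1, one_mul]
    have hsplit : ∑ j ∈ Finset.range N, P n j * |g j - L|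
        + ∑ j ∈ Finset.Ico N (n+1), P n j * |g j - L|
        = ∑ j ∈ Finset.range (n+1), P n j * |g j - L| :=
      Finset.sum_range_add_sum_Ico _ (by omega)
    have habs : ‖∑ j ∈ Finset.range (n+1), P n j * (g j - L)‖
        ≤ ∑ j ∈ Finset.range (n+1), P n j * |g j - L| := by
      refine (norm_sum_le _ _).trans_eq ?_
      apply Finset.sum_congr rfl
      intro j _
      rw [norm_mul, Real.norm_eq_abs, Real.norm_eq_abs, abs_of_nonneg (hPnn n j)]
    calc ‖∑ j ∈ Finset.range (n+1), P n j * (g j - L)‖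
        ≤ ∑ j ∈ Finset.range (n+1), P n j * |g j - L| := habs
      _ = _ + _ := hsplit.symm
      _ < ε/2 + ε/2 := add_lt_add_of_lt_of_le hbound1 hbound2
      _ = ε := by ring
  have hfin := key.add_const L
  rw [zero_add] at hfin
  apply hfin.congr
  intro n
  calc ∑ j ∈ Finset.range (n+1), P n j * (g j - L) + L
      = ∑ j ∈ Finset.range (n+1), (P n j * g j - P n j * L) + L := by
        congr 1; apply Finset.sum_congr rfl; intro j _; ring
    _ = ∑ j ∈ Finset.range (n+1), P n j * g j
        - (∑ j ∈ Finset.range (n+1), P n j) * L + L := by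
        rw [Finset.sum_sub_distrib, Finset.sum_mul]
    _ = ∑ j ∈ Finset.range (n+1), P n j * g j := by rw [hsum1]; ring
    _ = ∑ j ∈ Finset.range (n+1), (n.choose j : ℝ) * x^j * (1-x)^(n-j) * g j := rfl

theorem stmt_18 (Cf : ℝ) (hCf : 0 < Cf)
    (r : ℕ → ℝ) (hr0 : ∀ i, 0 ≤ r i) (hr2 : ∀ i, r i ≤ 2)
    (hrlim : Tendsto (fun i : ℕ => (i : ℝ) * r i) atTop (nhds Cf)) :
    (∀ x ∈ Ioc (0:ℝ) 1,
        Tendsto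
          (fun m : ℕ =>
            (m : ℝ) *
              ∑ i ∈ Finset.range (m + 1),
                (m.choose i : ℝ) * x ^ (i + 1) * (1 - x) ^ (m - i) * r i)
          atTop (nhds Cf)) ∧
      ∀ (𝒳 : Type) [Fintype 𝒳] [Nonempty 𝒳] (k : ℕ), k = Fintype.card 𝒳 →
        ∀ q : 𝒳 → ℝ, (∀ x, 0 < q x) → (∑ x, q x) = 1 →
          Tendsto
            (fun m : ℕ =>
              (m : ℝ) *
                ∑ x, (1 / q x) *
                  ∑ i ∈ Finset.range (m + 1),
                    (m.choose i : ℝ) * (q x) ^ (i + 2) * (1 - q x) ^ (m - i) * r i)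
            atTop (nhds (k * Cf)) := by
  -- r tends to 0
  have hr_to0 : Tendsto r atTop (nhds 0) := by
    have h := hrlim.mul tendsto_inv_atTop_nhds_zero_nat
    rw [mul_zero] at h
    apply h.congr'
    filter_upwards [eventually_ge_atTop 1] with i hi
    have : (i:ℝ) ≠ 0 := Nat.cast_ne_zero.2 (by omega)
    field_simp
  -- the auxiliary sequence g
  set g : ℕ → ℝ := fun j => (j:ℝ) * r (j-1) with hgdef
  have hsub : Tendsto (fun j : ℕ => j - 1) atTop atTop := tendsto_sub_atTop_nat 1
  have hgtend : Tendsto g atTop (nhds Cf) := by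
    have h1 := (hrlim.comp hsub).add (hr_to0.comp hsub)
    rw [add_zero] at h1
    apply h1.congr'
    filter_upwards [eventually_ge_atTop 1] with j hj
    simp only [Function.comp, hgdef]
    have hcast : ((j - 1 : ℕ) : ℝ) = (j:ℝ) - 1 := by
      rw [Nat.cast_sub hj]; simp
    rw [hcast]; ring
  obtain ⟨M, hMmem⟩ := hgtend.abs.bddAbove_range
  have hM : ∀ j, |g j| ≤ M := fun j => hMmem ⟨j, rfl⟩
  -- Part 1
  have part1 : ∀ x ∈ Ioc (0:ℝ) 1,
      Tendsto (fun m : ℕ => (m : ℝ) * ∑ i ∈ Finset.range (m + 1),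
        (m.choose i : ℝ) * x ^ (i + 1) * (1 - x) ^ (m - i) * r i)
        atTop (nhds Cf) := by
    rintro x ⟨hx0, hx1⟩
    have hT := lemA hx0 hx1 hM hgtend
    have hTs := hT.comp (tendsto_add_atTop_nat 1)
    have hq : Tendsto (fun m : ℕ => (m:ℝ)/((m:ℝ)+1)) atTop (nhds 1) :=
      tendsto_natCast_div_add_atTop 1
    have hprod := hq.mul hTs
    rw [one_mul] at hprod
    apply hprod.congr
    intro m
    have hm1 : ((m:ℝ) + 1) ≠ 0 := by positivity
    simp only [Function.comp]
    rw [Finset.sum_range_succ']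
    have hz : (((m+1).choose 0 : ℝ)) * x ^ 0 * (1-x) ^ (m+1-0) * g 0 = 0 := by
      simp [hgdef]
    rw [hz, add_zero, Finset.mul_sum, Finset.mul_sum]
    apply Finset.sum_congr rfl
    intro i _
    have hcho : ((m:ℝ) + 1) * (m.choose i : ℝ) = ((m+1).choose (i+1) : ℝ) * ((i:ℝ)+1) := by
      exact_mod_cast congrArg (Nat.cast : ℕ → ℝ) (Nat.add_one_mul_choose_eq m i)
    have hg1 : g (i+1) = ((i:ℝ)+1) * r i := by simp [hgdef]
    have hsub1 : m + 1 - (i + 1) = m - i := by omega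
    rw [hg1, hsub1, div_mul_eq_mul_div, div_eq_iff hm1]
    linear_combination (-((m:ℝ) * x ^ (i+1) * (1-x)^(m-i) * r i)) * hcho
  refine ⟨part1, ?_⟩
  intro 𝒳 _ _ k hk q hqpos hq1
  have hqle : ∀ x, q x ≤ 1 := fun x => by
    rw [← hq1]
    exact Finset.single_le_sum (fun y _ => (hqpos y).le) (Finset.mem_univ x)
  have h := tendsto_finset_sum (Finset.univ : Finset 𝒳)
    (fun x _ => part1 (q x) ⟨hqpos x, hqle x⟩)
  have hlim : ∑ _x : 𝒳, Cf = (k:ℝ) * Cf := by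
    rw [Finset.sum_const, Finset.card_univ, nsmul_eq_mul, hk]
  rw [hlim] at h
  apply h.congr
  intro m
  rw [Finset.mul_sum]
  apply Finset.sum_congr rfl
  intro x _
  rw [Finset.mul_sum, Finset.mul_sum, Finset.mul_sum]
  apply Finset.sum_congr rfl
  intro i _
  have hqx : q x ≠ 0 := (hqpos x).ne'
  field_simp
  ring
end
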